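/- arXiv:2005.12093 — 5 statements merged into one kernel-verified Lean document; each statement's English description precedes it below -/
import Mathlib

section
/- Let p, q be positive integers and let c_1,…,c_p, d_1,…,d_q be non-negative real constants with ∑_{i=1}^p c_i + ∑_{j=1}^q d_j < 1. Then there exist strictly positive constants γ_1,…,γ_p, δ_1,…,δ_q and some κ < 1 such that (γ_1+δ_1)·(∑_{i=1}^p c_i y_i + ∑_{j=1}^q d_j z_j) + ∑_{i=2}^p γ_i y_{i−1} + ∑_{j=2}^q δ_j z_{j−1} ≤ κ·(∑_{i=1}^p γ_i y_i + ∑_{j=1}^q δ_j z_j) holds for all non-negative reals y_1,…,y_p, z_1,…,z_q. -/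
open Finset

lemma aux_gamma (ε κ : ℝ) (hε : 0 < ε) (hκ0 : 0 < κ) (hκ1 : κ ≤ 1) (m p : ℕ)
    (hp : 1 ≤ p) (hm : p ≤ m) (c : ℕ → ℝ) (hc : ∀ i ∈ Finset.Icc 1 p, 0 ≤ c i) :
    ∃ γ : ℕ → ℝ, (∀ i, 1 ≤ i → 0 < γ i) ∧
      (γ 1 ≤ ε + ∑ k ∈ Finset.Icc 1 p, c k) ∧
      (∀ i ∈ Finset.Icc 1 p, γ (i + 1) + c i * κ ^ m = κ * γ i) ∧
      (∀ y : ℕ → ℝ, (∀ i ∈ Finset.Icc 1 p, 0 ≤ y i) →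
        ∑ i ∈ Finset.Icc 2 p, γ i * y (i - 1) ≤ ∑ i ∈ Finset.Icc 1 p, γ (i + 1) * y i) := by
  set γ : ℕ → ℝ :=
    fun i => ε * κ ^ (m + i) + ∑ k ∈ Finset.Icc i p, c k * κ ^ (m + i - 1 - k) with hγ
  have hγpos : ∀ i, 1 ≤ i → 0 < γ i := by
    intro i hi
    have h1 : 0 < ε * κ ^ (m + i) := by positivity
    have h2 : 0 ≤ ∑ k ∈ Finset.Icc i p, c k * κ ^ (m + i - 1 - k) := by
      apply Finset.sum_nonneg
      intro k hk
      simp only [Finset.mem_Icc] at hk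
      have : 0 ≤ c k := hc k (Finset.mem_Icc.mpr ⟨le_trans hi hk.1, hk.2⟩)
      positivity
    simp only [hγ]; linarith
  refine ⟨γ, hγpos, ?_, ?_, ?_⟩
  · simp only [hγ]
    gcongr ?_ + ?_
    · calc ε * κ ^ (m + 1) ≤ ε * 1 := by
            apply mul_le_mul_of_nonneg_left _ hε.le
            exact pow_le_one₀ hκ0.le hκ1
        _ = ε := mul_one ε
    · apply Finset.sum_le_sum
      intro k hk
      have hck := hc k hk
      calc c k * κ ^ (m + 1 - 1 - k) ≤ c k * 1 := by
            apply mul_le_mul_of_nonneg_left _ hck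
            exact pow_le_one₀ hκ0.le hκ1
        _ = c k := mul_one _
  · intro i hi
    simp only [Finset.mem_Icc] at hi
    have hsplit : Finset.Icc i p = insert i (Finset.Icc (i + 1) p) := by
      ext k; simp only [Finset.mem_Icc, Finset.mem_insert]; omega
    simp only [hγ]
    rw [hsplit, Finset.sum_insert (by simp), mul_add, mul_add, Finset.mul_sum]
    have e1 : κ * (ε * κ ^ (m + i)) = ε * κ ^ (m + (i + 1)) := by
      rw [show m + (i + 1) = (m + i) + 1 by ring, pow_succ]; ring
    have e2 : ∀ k ∈ Finset.Icc (i + 1) p,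
        c k * κ ^ (m + (i + 1) - 1 - k) = κ * (c k * κ ^ (m + i - 1 - k)) := by
      intro k hk
      simp only [Finset.mem_Icc] at hk
      rw [show m + (i + 1) - 1 - k = (m + i - 1 - k) + 1 by omega, pow_succ]; ring
    rw [Finset.sum_congr rfl e2, e1]
    have e3 : κ * (c i * κ ^ (m + i - 1 - i)) = c i * κ ^ m := by
      have h1 : m + i - 1 - i = m - 1 := by omega
      have h2 : m - 1 + 1 = m := by omega
      calc κ * (c i * κ ^ (m + i - 1 - i)) = c i * (κ ^ (m - 1) * κ) := by rw [h1]; ring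
        _ = c i * κ ^ (m - 1 + 1) := by rw [pow_succ]
        _ = c i * κ ^ m := by rw [h2]
    rw [e3]; ring
  · intro y hy
    have heq : ∑ i ∈ Finset.Icc 2 p, γ i * y (i - 1)
        = ∑ i ∈ Finset.Icc 1 (p - 1), γ (i + 1) * y i := by
      apply Finset.sum_nbij' (fun i => i - 1) (fun i => i + 1)
      · intro a ha; simp only [Finset.mem_Icc] at *; omega
      · intro a ha; simp only [Finset.mem_Icc] at *; omega
      · intro a ha; simp only [Finset.mem_Icc] at ha; omega
      · intro a ha; simp only [Finset.mem_Icc] at ha; omega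
      · intro a ha; simp only [Finset.mem_Icc] at ha
        congr 2; omega
    rw [heq]
    apply Finset.sum_le_sum_of_subset_of_nonneg
    · apply Finset.Icc_subset_Icc_right; omega
    · intro i hi _
      have h1 : 0 < γ (i + 1) := hγpos _ (by omega)
      have h2 : 0 ≤ y i := hy i hi
      positivity

/-- Lemma 2.1 (Doukhan, Mamode Khan, Neumann): given non-negative constants
`c_1,…,c_p, d_1,…,d_q` with `∑ c_i + ∑ d_j < 1`, there are strictly positive constants
`γ_1,…,γ_p, δ_1,…,δ_q` and `κ < 1` such that
`(γ_1+δ_1)(∑ c_i y_i + ∑ d_j z_j) + ∑_{i=2}^p γ_i y_{i-1} + ∑_{j=2}^q δ_j z_{j-1}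
  ≤ κ (∑ γ_i y_i + ∑ δ_j z_j)` for all non-negative `y`, `z`. -/
theorem stmt0 (p q : ℕ) (hp : 0 < p) (hq : 0 < q) (c d : ℕ → ℝ)
    (hc : ∀ i ∈ Finset.Icc 1 p, 0 ≤ c i) (hd : ∀ j ∈ Finset.Icc 1 q, 0 ≤ d j)
    (hsum : (∑ i ∈ Finset.Icc 1 p, c i) + (∑ j ∈ Finset.Icc 1 q, d j) < 1) :
    ∃ (γ δ : ℕ → ℝ) (κ : ℝ),
      (∀ i ∈ Finset.Icc 1 p, 0 < γ i) ∧ (∀ j ∈ Finset.Icc 1 q, 0 < δ j) ∧ κ < 1 ∧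
      ∀ (y z : ℕ → ℝ), (∀ i ∈ Finset.Icc 1 p, 0 ≤ y i) → (∀ j ∈ Finset.Icc 1 q, 0 ≤ z j) →
        (γ 1 + δ 1) * ((∑ i ∈ Finset.Icc 1 p, c i * y i) + ∑ j ∈ Finset.Icc 1 q, d j * z j)
          + (∑ i ∈ Finset.Icc 2 p, γ i * y (i - 1))
          + (∑ j ∈ Finset.Icc 2 q, δ j * z (j - 1))
        ≤ κ * ((∑ i ∈ Finset.Icc 1 p, γ i * y i) + ∑ j ∈ Finset.Icc 1 q, δ j * z j) := by
  set S := (∑ i ∈ Finset.Icc 1 p, c i) + ∑ j ∈ Finset.Icc 1 q, d j with hSdef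
  have hS0 : 0 ≤ S :=
    add_nonneg (Finset.sum_nonneg hc) (Finset.sum_nonneg hd)
  have hS1 : S < 1 := hsum
  set m := max p q with hmdef
  have hm0 : 0 < m := lt_of_lt_of_le hp (le_max_left p q)
  set u : ℝ := (1 + S) / 2 with hudef
  have hu0 : 0 < u := by simp only [hudef]; linarith
  have hu1 : u < 1 := by simp only [hudef]; linarith
  set ε : ℝ := (1 - S) / 8 with hεdef
  have hε : 0 < ε := by simp only [hεdef]; linarith
  set κ : ℝ := u ^ ((m : ℝ)⁻¹) with hκdef
  have hκ0 : 0 < κ := Real.rpow_pos_of_pos hu0 _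
  have hκ1 : κ < 1 := Real.rpow_lt_one hu0.le hu1 (by positivity)
  have hκm : κ ^ m = u := by
    rw [hκdef, ← Real.rpow_natCast (u ^ ((m : ℝ)⁻¹)) m, ← Real.rpow_mul hu0.le,
      inv_mul_cancel₀ (by exact_mod_cast hm0.ne'), Real.rpow_one]
  obtain ⟨γ, hγpos, hγ1, hγkey, hγshift⟩ :=
    aux_gamma ε κ hε hκ0 hκ1.le m p hp (le_max_left p q) c hc
  obtain ⟨δ, hδpos, hδ1, hδkey, hδshift⟩ :=
    aux_gamma ε κ hε hκ0 hκ1.le m q hq (le_max_right p q) d hd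
  have hA : γ 1 + δ 1 ≤ κ ^ m := by
    rw [hκm]
    have := hγ1; have := hδ1
    simp only [hudef]; linarith
  refine ⟨γ, δ, κ, ?_, ?_, hκ1, ?_⟩
  · intro i hi; exact hγpos i (Finset.mem_Icc.mp hi).1
  · intro j hj; exact hδpos j (Finset.mem_Icc.mp hj).1
  intro y z hy hz
  have key1 : (γ 1 + δ 1) * (∑ i ∈ Finset.Icc 1 p, c i * y i)
      + ∑ i ∈ Finset.Icc 1 p, γ (i + 1) * y i
      ≤ κ * ∑ i ∈ Finset.Icc 1 p, γ i * y i := by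
    rw [Finset.mul_sum, Finset.mul_sum, ← Finset.sum_add_distrib]
    apply Finset.sum_le_sum
    intro i hi
    have hk := hγkey i hi
    have hyi := hy i hi
    have hci := hc i hi
    calc (γ 1 + δ 1) * (c i * y i) + γ (i + 1) * y i
        = ((γ 1 + δ 1) * c i + γ (i + 1)) * y i := by ring
      _ ≤ (c i * κ ^ m + γ (i + 1)) * y i := by
          apply mul_le_mul_of_nonneg_right _ hyi
          have := mul_le_mul_of_nonneg_right hA hci
          linarith [this]
      _ = κ * (γ i * y i) := by rw [show c i * κ ^ m + γ (i + 1) = κ * γ i by linarith]; ring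
  have key2 : (γ 1 + δ 1) * (∑ j ∈ Finset.Icc 1 q, d j * z j)
      + ∑ j ∈ Finset.Icc 1 q, δ (j + 1) * z j
      ≤ κ * ∑ j ∈ Finset.Icc 1 q, δ j * z j := by
    rw [Finset.mul_sum, Finset.mul_sum, ← Finset.sum_add_distrib]
    apply Finset.sum_le_sum
    intro j hj
    have hk := hδkey j hj
    have hzj := hz j hj
    have hdj := hd j hj
    calc (γ 1 + δ 1) * (d j * z j) + δ (j + 1) * z j
        = ((γ 1 + δ 1) * d j + δ (j + 1)) * z j := by ring
      _ ≤ (d j * κ ^ m + δ (j + 1)) * z j := by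
          apply mul_le_mul_of_nonneg_right _ hzj
          have := mul_le_mul_of_nonneg_right hA hdj
          linarith [this]
      _ = κ * (δ j * z j) := by rw [show d j * κ ^ m + δ (j + 1) = κ * δ j by linarith]; ring
  have h1 := hγshift y hy
  have h2 := hδshift z hz
  rw [mul_add, mul_add]
  linarith [key1, key2, h1, h2]
end

section
/- Assume conditions (A1) and (A2) and let γ_1,…,γ_p, δ_1,…,δ_q > 0 and κ < 1 be constants such that (γ_1+δ_1)(∑_i c_i y_i + ∑_j d_j z_j) + ∑_{i=2}^p γ_i y_{i−1} + ∑_{j=2}^q δ_j z_{j−1} ≤ κ(∑_i γ_i y_i + ∑_j δ_j z_j) for all non-negative y_i, z_j. Then for all states z, z' ∈ S^≥ = ℕ₀^p × [0,∞)^q there exists a probability measure ξ on S^≥ × S^≥ whose first marginal is π^Z(z, ·), whose second marginal is π^Z(z', ·), and which satisfies ∫ Δ_{γ,δ}(u, u') dξ(u, u') ≤ κ · Δ_{γ,δ}(z, z'). -/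
open MeasureTheory ProbabilityTheory ENNReal

/-- The state space `S^≥ = ℕ₀^{p+1} × [0,∞)^{q+1}` of the squared-count/volatility chain. -/
abbrev GState (p q : ℕ) := (Fin (p + 1) → ℕ) × (Fin (q + 1) → NNReal)

/-- The Markov kernel `π^Z` (as a map into measures): from state `z = (x, v)` move to
`((X², x_1,…,x_p), (f z, v_1,…,v_q))` where `X ∼ Q_{f z}`. -/
noncomputable def piZ {p q : ℕ} (f : GState p q → NNReal) (Q : Kernel NNReal ℤ)
    (z : GState p q) : Measure (GState p q) :=
  (Q (f z)).map (fun X =>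
    (Fin.cons (X.natAbs ^ 2) (Fin.init z.1), Fin.cons (f z) (Fin.init z.2)))

/-- The metric `Δ_{γ,δ}` on `S^≥`. -/
noncomputable def Delta {p q : ℕ} (γ : Fin (p + 1) → ℝ) (δ : Fin (q + 1) → ℝ)
    (z z' : GState p q) : ℝ :=
  (∑ i, γ i * |(z.1 i : ℝ) - (z'.1 i : ℝ)|) + ∑ j, δ j * |(z.2 j : ℝ) - (z'.2 j : ℝ)|

/-!
Say `f z ≤ f z'`; the other case follows by swapping the coupling, since `Δ` is symmetric.
By (A2) the law of `|X'|`, `X' ∼ Q_{f z'}`, stochastically dominates that of `|X|`,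
`X ∼ Q_{f z}`, so under the quantile coupling of these two laws `|X| ≤ |X'|` almost surely, and
then `E|X² - X'²| = E X'² - E X² = f z' - f z`. Driving both chains with this pair, the new
first coordinates differ by `|X² - X'²|`, the new volatilities by `|f z - f z'|`, which (A1)
bounds by `∑ c_i |x_i - x_i'| + ∑ d_j |v_j - v_j'|`, and the remaining coordinates are the old
ones shifted by one lag. The weight inequality turns the resulting bound into `κ Δ(z, z')`.
-/

open Set

section QuantileCoupling

noncomputable def natCDF (μ : Measure ℕ) (k : ℕ) : ℝ := (μ (Iic k)).toReal

/-- Since `sInf ∅ = 0`, this is junk at those `u` exceeding every value of the CDF; for a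
probability measure they satisfy `u ≥ 1`, a null set for `uniformIoc`. -/
noncomputable def natQuantile (μ : Measure ℕ) (u : ℝ) : ℕ := sInf {k | u ≤ natCDF μ k}

noncomputable def uniformIoc : Measure ℝ := volume.restrict (Ioc 0 1)

instance : IsProbabilityMeasure uniformIoc := ⟨by simp [uniformIoc]⟩

lemma ae_lt_one_uniformIoc : ∀ᵐ u ∂uniformIoc, u < 1 := by
  rw [uniformIoc, ae_restrict_iff' measurableSet_Ioc]
  refine (measure_eq_zero_iff_ae_notMem.1 (Real.volume_singleton (a := 1))).mono ?_
  intro u hu hmem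
  exact lt_of_le_of_ne hmem.2 hu

lemma uniformIoc_Iic {a : ℝ} (ha : a ≤ 1) : uniformIoc (Iic a) = ENNReal.ofReal a := by
  rw [uniformIoc, Measure.restrict_apply measurableSet_Iic, inter_comm, Ioc_inter_Iic,
    inf_eq_right.2 ha, Real.volume_Ioc, sub_zero]

variable {μ : Measure ℕ}

lemma natCDF_mono [IsFiniteMeasure μ] : Monotone (natCDF μ) := fun _ _ hab =>
  ENNReal.toReal_mono (measure_ne_top μ _) (measure_mono (Iic_subset_Iic.2 hab))

lemma natCDF_le_one [IsProbabilityMeasure μ] {k : ℕ} : natCDF μ k ≤ 1 :=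
  ENNReal.toReal_le_of_le_ofReal zero_le_one (by simpa using prob_le_one)

lemma tendsto_natCDF_atTop [IsProbabilityMeasure μ] :
    Filter.Tendsto (natCDF μ) Filter.atTop (nhds 1) := by
  have h := tendsto_measure_iUnion_atTop (μ := μ) (monotone_Iic (α := ℕ))
  rw [iUnion_Iic, measure_univ] at h
  exact (ENNReal.tendsto_toReal ENNReal.one_ne_top).comp h

lemma natQuantile_le_iff [IsFiniteMeasure μ] {u : ℝ} {k : ℕ} :
    natQuantile μ u ≤ k ↔ u ≤ natCDF μ k ∨ ∀ m, natCDF μ m < u := by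
  by_cases hne : {k | u ≤ natCDF μ k}.Nonempty
  · have hnot : ¬ ∀ m, natCDF μ m < u := fun h => (h _ |>.not_ge) hne.some_mem
    simp only [hnot, or_false]
    exact ⟨fun h => (Nat.sInf_mem hne).trans (natCDF_mono h), fun h => Nat.sInf_le h⟩
  · have hall : ∀ m, natCDF μ m < u := fun m => not_le.1 fun h => hne ⟨m, h⟩
    simp only [natQuantile, not_nonempty_iff_eq_empty.1 hne, Nat.sInf_empty, zero_le, hall,
      implies_true, or_true]

lemma natQuantile_le_iff_of_lt_one [IsProbabilityMeasure μ] {u : ℝ} (hu : u < 1) {k : ℕ} :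
    natQuantile μ u ≤ k ↔ u ≤ natCDF μ k := by
  obtain ⟨m, hm⟩ := ((tendsto_natCDF_atTop (μ := μ)).eventually (eventually_gt_nhds hu)).exists
  rw [natQuantile_le_iff]
  exact or_iff_left fun h => (h m).not_gt hm

lemma measurable_natQuantile [IsFiniteMeasure μ] : Measurable (natQuantile μ) := by
  refine measurable_of_Iic fun k => ?_
  have : natQuantile μ ⁻¹' Iic k = Iic (natCDF μ k) ∪ ⋂ m, Ioi (natCDF μ m) := by
    ext u
    simp [natQuantile_le_iff]
  rw [this]
  exact measurableSet_Iic.union (.iInter fun _ => measurableSet_Ioi)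

lemma map_natQuantile_uniformIoc [IsProbabilityMeasure μ] :
    uniformIoc.map (natQuantile μ) = μ := by
  have : IsProbabilityMeasure (uniformIoc.map (natQuantile μ)) :=
    Measure.isProbabilityMeasure_map measurable_natQuantile.aemeasurable
  refine Measure.ext_of_Iic _ _ fun k => ?_
  have hae : natQuantile μ ⁻¹' Iic k =ᵐ[uniformIoc] Iic (natCDF μ k) :=
    ae_lt_one_uniformIoc.mono fun u hu => propext (natQuantile_le_iff_of_lt_one hu)
  rw [Measure.map_apply measurable_natQuantile measurableSet_Iic, measure_congr hae,
    uniformIoc_Iic natCDF_le_one, natCDF, ENNReal.ofReal_toReal (measure_ne_top μ _)]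

lemma natQuantile_le_natQuantile [IsProbabilityMeasure μ] {μ' : Measure ℕ}
    [IsProbabilityMeasure μ'] (h : ∀ k, μ' (Iic k) ≤ μ (Iic k)) {u : ℝ} (hu : u < 1) :
    natQuantile μ u ≤ natQuantile μ' u := by
  rw [natQuantile_le_iff_of_lt_one hu]
  exact ((natQuantile_le_iff_of_lt_one hu).1 le_rfl).trans
    (ENNReal.toReal_mono (measure_ne_top μ _) (h _))

noncomputable def quantileCoupling (μ μ' : Measure ℕ) : Measure (ℕ × ℕ) :=
  uniformIoc.map fun u => (natQuantile μ u, natQuantile μ' u)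

theorem exists_coupling_ae_le (μ μ' : Measure ℕ) [IsProbabilityMeasure μ]
    [IsProbabilityMeasure μ'] (h : ∀ k, μ' (Iic k) ≤ μ (Iic k)) :
    ∃ ν : Measure (ℕ × ℕ), IsProbabilityMeasure ν ∧ ν.map Prod.fst = μ ∧
      ν.map Prod.snd = μ' ∧ ∀ᵐ n ∂ν, n.1 ≤ n.2 := by
  have hm : Measurable fun u => (natQuantile μ u, natQuantile μ' u) :=
    measurable_natQuantile.prodMk measurable_natQuantile
  refine ⟨quantileCoupling μ μ', Measure.isProbabilityMeasure_map hm.aemeasurable, ?_, ?_, ?_⟩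
  · rw [quantileCoupling, Measure.map_map measurable_fst hm]
    exact map_natQuantile_uniformIoc
  · rw [quantileCoupling, Measure.map_map measurable_snd hm]
    exact map_natQuantile_uniformIoc
  · rw [quantileCoupling, ae_map_iff hm.aemeasurable (.of_discrete)]
    exact ae_lt_one_uniformIoc.mono fun u hu => natQuantile_le_natQuantile h hu

end QuantileCoupling

theorem lintegral_sub_of_ae_le {α : Type*} [MeasurableSpace α] {ν : Measure (α × α)}
    {g : α → ℝ≥0∞} (hg : Measurable g) (hfin : ∫⁻ a, g a ∂(ν.map Prod.fst) ≠ ∞)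
    (hle : ∀ᵐ x ∂ν, g x.1 ≤ g x.2) :
    ∫⁻ x, (g x.2 - g x.1) ∂ν = ∫⁻ a, g a ∂(ν.map Prod.snd) - ∫⁻ a, g a ∂(ν.map Prod.fst) := by
  rw [lintegral_map hg measurable_fst] at hfin ⊢
  rw [lintegral_map hg measurable_snd]
  exact lintegral_sub (hg.comp measurable_fst) hfin hle

lemma ENNReal.ofReal_abs_natCast_sq_sub {m n : ℕ} (h : m ≤ n) :
    ENNReal.ofReal |(m : ℝ) ^ 2 - (n : ℝ) ^ 2| = (n : ℝ≥0∞) ^ 2 - (m : ℝ≥0∞) ^ 2 := by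
  rw [abs_sub_comm, abs_of_nonneg (sub_nonneg.2 (by gcongr)), ENNReal.ofReal_sub _ (by positivity),
    ENNReal.ofReal_pow (Nat.cast_nonneg _), ENNReal.ofReal_pow (Nat.cast_nonneg _),
    ENNReal.ofReal_natCast, ENNReal.ofReal_natCast]

theorem exists_coupling_swap {α : Type*} [MeasurableSpace α] {μ μ' : Measure α}
    {c : α × α → ℝ≥0∞} (hc : Measurable c) (hsymm : ∀ x, c x.swap = c x) {r : ℝ≥0∞}
    (h : ∃ ξ : Measure (α × α), IsProbabilityMeasure ξ ∧ ξ.map Prod.fst = μ ∧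
      ξ.map Prod.snd = μ' ∧ ∫⁻ x, c x ∂ξ ≤ r) :
    ∃ ξ : Measure (α × α), IsProbabilityMeasure ξ ∧ ξ.map Prod.fst = μ' ∧
      ξ.map Prod.snd = μ ∧ ∫⁻ x, c x ∂ξ ≤ r := by
  obtain ⟨ξ, hξ, hfst, hsnd, hint⟩ := h
  refine ⟨ξ.map Prod.swap, Measure.isProbabilityMeasure_map measurable_swap.aemeasurable,
    ?_, ?_, ?_⟩
  · rw [Measure.map_map measurable_fst measurable_swap]
    exact hsnd
  · rw [Measure.map_map measurable_snd measurable_swap]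
    exact hfst
  · rwa [lintegral_map hc measurable_swap, lintegral_congr fun x => hsymm x]

section Garch

variable {p q : ℕ}

def GState.next (z : GState p q) (v : NNReal) (n : ℕ) : GState p q :=
  (Fin.cons (n ^ 2) (Fin.init z.1), Fin.cons v (Fin.init z.2))

lemma piZ_eq_map (f : GState p q → NNReal) (Q : Kernel NNReal ℤ) (z : GState p q) :
    piZ f Q z = ((Q (f z)).map Int.natAbs).map (z.next (f z)) := by
  rw [Measure.map_map .of_discrete .of_discrete]
  rfl

variable (γ : Fin (p + 1) → ℝ) (δ : Fin (q + 1) → ℝ)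

lemma Delta_comm (z z' : GState p q) : Delta γ δ z z' = Delta γ δ z' z := by
  simp only [Delta, abs_sub_comm]

lemma measurable_Delta : Measurable fun x : GState p q × GState p q => Delta γ δ x.1 x.2 := by
  unfold Delta
  fun_prop

noncomputable def laggedDelta (z z' : GState p q) : ℝ :=
  (∑ i : Fin p, γ i.succ * |(z.1 i.castSucc : ℝ) - z'.1 i.castSucc|) +
    ∑ j : Fin q, δ j.succ * |(z.2 j.castSucc : ℝ) - z'.2 j.castSucc|

lemma Delta_next (z z' : GState p q) (v v' : NNReal) (m n : ℕ) :
    Delta γ δ (z.next v m) (z'.next v' n) =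
      γ 0 * |(m : ℝ) ^ 2 - (n : ℝ) ^ 2| + (δ 0 * |(v : ℝ) - v'| + laggedDelta γ δ z z') := by
  simp only [Delta, GState.next, laggedDelta, Fin.sum_univ_succ, Fin.cons_zero, Fin.cons_succ,
    Fin.init]
  push_cast
  ring

lemma laggedDelta_nonneg (hγ : ∀ i, 0 ≤ γ i) (hδ : ∀ j, 0 ≤ δ j) (z z' : GState p q) :
    0 ≤ laggedDelta γ δ z z' := by
  unfold laggedDelta
  exact add_nonneg (Finset.sum_nonneg fun i _ => mul_nonneg (hγ _) (abs_nonneg _))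
    (Finset.sum_nonneg fun j _ => mul_nonneg (hδ _) (abs_nonneg _))

lemma add_laggedDelta_le {c : Fin (p + 1) → ℝ} {d : Fin (q + 1) → ℝ} {κ : ℝ}
    (hcontr : ∀ (y : Fin (p + 1) → ℝ) (w : Fin (q + 1) → ℝ),
      (∀ i, 0 ≤ y i) → (∀ j, 0 ≤ w j) →
      (γ 0 + δ 0) * ((∑ i, c i * y i) + ∑ j, d j * w j)
          + (∑ i : Fin p, γ i.succ * y i.castSucc) + (∑ j : Fin q, δ j.succ * w j.castSucc)
        ≤ κ * ((∑ i, γ i * y i) + ∑ j, δ j * w j))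
    (hγδ : 0 ≤ γ 0 + δ 0) {z z' : GState p q} {a : ℝ}
    (ha : |a| ≤ (∑ i, c i * |(z.1 i : ℝ) - z'.1 i|) + ∑ j, d j * |(z.2 j : ℝ) - z'.2 j|) :
    (γ 0 + δ 0) * |a| + laggedDelta γ δ z z' ≤ κ * Delta γ δ z z' := by
  have h := hcontr (fun i => |(z.1 i : ℝ) - z'.1 i|) (fun j => |(z.2 j : ℝ) - z'.2 j|)
    (fun _ => abs_nonneg _) (fun _ => abs_nonneg _)
  have := mul_le_mul_of_nonneg_left ha hγδ
  simp only [Delta, laggedDelta] at h ⊢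
  linarith

lemma lintegral_Delta_map_next (hγ : ∀ i, 0 ≤ γ i) (hδ : ∀ j, 0 ≤ δ j) (ν : Measure (ℕ × ℕ))
    [IsProbabilityMeasure ν] (z z' : GState p q) (v v' : NNReal) :
    ∫⁻ u, ENNReal.ofReal (Delta γ δ u.1 u.2) ∂(ν.map (Prod.map (z.next v) (z'.next v'))) =
      ENNReal.ofReal (γ 0) * ∫⁻ n, ENNReal.ofReal |(n.1 : ℝ) ^ 2 - (n.2 : ℝ) ^ 2| ∂ν +
        ENNReal.ofReal (δ 0 * |(v : ℝ) - v'| + laggedDelta γ δ z z') := by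
  have hpt (n : ℕ × ℕ) : ENNReal.ofReal (Delta γ δ (z.next v n.1) (z'.next v' n.2)) =
      ENNReal.ofReal (γ 0) * ENNReal.ofReal |(n.1 : ℝ) ^ 2 - (n.2 : ℝ) ^ 2| +
        ENNReal.ofReal (δ 0 * |(v : ℝ) - v'| + laggedDelta γ δ z z') := by
    rw [Delta_next, ENNReal.ofReal_add (mul_nonneg (hγ 0) (abs_nonneg _))
      (add_nonneg (mul_nonneg (hδ 0) (abs_nonneg _)) (laggedDelta_nonneg γ δ hγ hδ z z')),
      ENNReal.ofReal_mul (hγ 0)]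
  rw [lintegral_map (measurable_Delta γ δ).ennreal_ofReal .of_discrete]
  simp only [Prod.map_fst, Prod.map_snd, hpt]
  rw [lintegral_add_right _ measurable_const, lintegral_const_mul _ .of_discrete, lintegral_const,
    measure_univ, mul_one]

end Garch

theorem exists_coupling_piZ_of_le {p q : ℕ} (f : GState p q → NNReal)
    (Q : Kernel NNReal ℤ) [IsMarkovKernel Q]
    (hQmom : ∀ v : NNReal, ∫⁻ x, (x.natAbs : ℝ≥0∞) ^ 2 ∂(Q v) = v)
    {c : Fin (p + 1) → ℝ} {d : Fin (q + 1) → ℝ}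
    (hA1 : ∀ z z' : GState p q,
      |(f z : ℝ) - (f z' : ℝ)| ≤
        (∑ i, c i * |(z.1 i : ℝ) - (z'.1 i : ℝ)|) + ∑ j, d j * |(z.2 j : ℝ) - (z'.2 j : ℝ)|)
    (hA2 : ∀ v v' : NNReal, v < v' → ∀ k : ℕ,
      Q v' {x : ℤ | x.natAbs ≤ k} ≤ Q v {x : ℤ | x.natAbs ≤ k})
    {γ : Fin (p + 1) → ℝ} {δ : Fin (q + 1) → ℝ} {κ : ℝ}
    (hγ : ∀ i, 0 ≤ γ i) (hδ : ∀ j, 0 ≤ δ j)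
    (hcontr : ∀ (y : Fin (p + 1) → ℝ) (w : Fin (q + 1) → ℝ),
      (∀ i, 0 ≤ y i) → (∀ j, 0 ≤ w j) →
      (γ 0 + δ 0) * ((∑ i, c i * y i) + ∑ j, d j * w j)
          + (∑ i : Fin p, γ i.succ * y i.castSucc) + (∑ j : Fin q, δ j.succ * w j.castSucc)
        ≤ κ * ((∑ i, γ i * y i) + ∑ j, δ j * w j))
    {z z' : GState p q} (hle : f z ≤ f z') :
    ∃ ξ : Measure (GState p q × GState p q),
      IsProbabilityMeasure ξ ∧
      ξ.map Prod.fst = piZ f Q z ∧ ξ.map Prod.snd = piZ f Q z' ∧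
      ∫⁻ u, ENNReal.ofReal (Delta γ δ u.1 u.2) ∂ξ ≤ ENNReal.ofReal (κ * Delta γ δ z z') := by
  set v := f z
  set v' := f z'
  have hmom (w : NNReal) : ∫⁻ k, (k : ℝ≥0∞) ^ 2 ∂((Q w).map Int.natAbs) = w := by
    rw [lintegral_map .of_discrete .of_discrete]
    exact hQmom w
  have hdom (k : ℕ) : (Q v').map Int.natAbs (Iic k) ≤ (Q v).map Int.natAbs (Iic k) := by
    rw [Measure.map_apply .of_discrete measurableSet_Iic,
      Measure.map_apply .of_discrete measurableSet_Iic]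
    rcases hle.lt_or_eq with h | h
    · exact hA2 v v' h k
    · rw [h]
  have (w : NNReal) : IsProbabilityMeasure ((Q w).map Int.natAbs) :=
    Measure.isProbabilityMeasure_map Measurable.of_discrete.aemeasurable
  obtain ⟨ν, hν, hfst, hsnd, hmono⟩ := exists_coupling_ae_le _ _ hdom
  have hF : Measurable (Prod.map (z.next v) (z'.next v')) := .of_discrete
  refine ⟨ν.map (Prod.map (z.next v) (z'.next v')),
    Measure.isProbabilityMeasure_map hF.aemeasurable, ?_, ?_, ?_⟩
  · rw [piZ_eq_map, ← hfst, Measure.map_map measurable_fst hF,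
      Measure.map_map .of_discrete measurable_fst]
    rfl
  · rw [piZ_eq_map, ← hsnd, Measure.map_map measurable_snd hF,
      Measure.map_map .of_discrete measurable_snd]
    rfl
  have hsq : ∫⁻ n, ENNReal.ofReal |(n.1 : ℝ) ^ 2 - (n.2 : ℝ) ^ 2| ∂ν =
      ENNReal.ofReal |(v : ℝ) - v'| := by
    rw [lintegral_congr_ae (hmono.mono fun n hn => ENNReal.ofReal_abs_natCast_sq_sub hn),
      lintegral_sub_of_ae_le (g := fun k : ℕ => (k : ℝ≥0∞) ^ 2) .of_discrete
        (by rw [hfst, hmom]; exact coe_ne_top) (hmono.mono fun n hn => by gcongr),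
      hfst, hsnd, hmom, hmom, ← ENNReal.coe_sub, ← ENNReal.ofReal_coe_nnreal,
      NNReal.coe_sub hle, abs_sub_comm, abs_of_nonneg (sub_nonneg.2 (NNReal.coe_le_coe.2 hle))]
  rw [lintegral_Delta_map_next γ δ hγ hδ, hsq, ← ENNReal.ofReal_mul (hγ 0),
    ← ENNReal.ofReal_add (mul_nonneg (hγ 0) (abs_nonneg _))
      (add_nonneg (mul_nonneg (hδ 0) (abs_nonneg _)) (laggedDelta_nonneg γ δ hγ hδ z z'))]
  refine ENNReal.ofReal_le_ofReal ?_
  have := add_laggedDelta_le γ δ hcontr (add_nonneg (hγ 0) (hδ 0)) (hA1 z z')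
  linarith

theorem stmt1_general {p q : ℕ} (f : GState p q → NNReal)
    (Q : Kernel NNReal ℤ) [IsMarkovKernel Q]
    -- second-moment parametrization (21.1c): `∫ x² dQ_v(x) = v`
    (hQmom : ∀ v : NNReal, ∫⁻ x, (x.natAbs : ℝ≥0∞) ^ 2 ∂(Q v) = v)
    -- (A1): contraction of the volatility function
    (c : Fin (p + 1) → ℝ) (d : Fin (q + 1) → ℝ)
    (hA1 : ∀ z z' : GState p q,
      |(f z : ℝ) - (f z' : ℝ)| ≤
        (∑ i, c i * |(z.1 i : ℝ) - (z'.1 i : ℝ)|) + ∑ j, d j * |(z.2 j : ℝ) - (z'.2 j : ℝ)|)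
    -- (A2): stochastic monotonicity of `|X|` in `v`
    (hA2 : ∀ v v' : NNReal, v < v' → ∀ k : ℕ,
      Q v' {x : ℤ | x.natAbs ≤ k} ≤ Q v {x : ℤ | x.natAbs ≤ k})
    -- weights as in Lemma 2.1
    (γ : Fin (p + 1) → ℝ) (δ : Fin (q + 1) → ℝ) (κ : ℝ)
    (hγ : ∀ i, 0 < γ i) (hδ : ∀ j, 0 < δ j)
    (hcontr : ∀ (y : Fin (p + 1) → ℝ) (w : Fin (q + 1) → ℝ),
      (∀ i, 0 ≤ y i) → (∀ j, 0 ≤ w j) →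
      (γ 0 + δ 0) * ((∑ i, c i * y i) + ∑ j, d j * w j)
          + (∑ i : Fin p, γ i.succ * y i.castSucc) + (∑ j : Fin q, δ j.succ * w j.castSucc)
        ≤ κ * ((∑ i, γ i * y i) + ∑ j, δ j * w j)) :
    ∀ z z' : GState p q, ∃ ξ : Measure (GState p q × GState p q),
      IsProbabilityMeasure ξ ∧
      ξ.map Prod.fst = piZ f Q z ∧ ξ.map Prod.snd = piZ f Q z' ∧
      ∫⁻ u, ENNReal.ofReal (Delta γ δ u.1 u.2) ∂ξ ≤ ENNReal.ofReal (κ * Delta γ δ z z') := by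
  intro z z'
  wlog hle : f z ≤ f z' generalizing z z'
  · refine exists_coupling_swap (measurable_Delta γ δ).ennreal_ofReal
      (fun x => by rw [Prod.fst_swap, Prod.snd_swap, Delta_comm]) ?_
    rw [Delta_comm]
    exact this z' z (le_of_not_ge hle)
  exact exists_coupling_piZ_of_le f Q hQmom hA1 hA2 (fun i => (hγ i).le) (fun j => (hδ j).le)
    hcontr hle

/-- Proposition 2.1(i): under (A1), (A2) and the weight inequality of Lemma 2.1, for any two
states `z, z'` there is a coupling `ξ` of `π^Z(z,·)` and `π^Z(z',·)` with
`∫ Δ_{γ,δ} dξ ≤ κ Δ_{γ,δ}(z, z')`. -/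
theorem stmt1 {p q : ℕ} (f : GState p q → NNReal) (hf : Measurable f)
    (Q : Kernel NNReal ℤ) [IsMarkovKernel Q]
    -- second-moment parametrization (21.1c): `∫ x² dQ_v(x) = v`
    (hQmom : ∀ v : NNReal, ∫⁻ x, (x.natAbs : ℝ≥0∞) ^ 2 ∂(Q v) = v)
    -- (A1): contraction of the volatility function
    (c : Fin (p + 1) → ℝ) (d : Fin (q + 1) → ℝ)
    (hc : ∀ i, 0 ≤ c i) (hd : ∀ j, 0 ≤ d j)
    (hcd : (∑ i, c i) + ∑ j, d j < 1)
    (hA1 : ∀ z z' : GState p q,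
      |(f z : ℝ) - (f z' : ℝ)| ≤
        (∑ i, c i * |(z.1 i : ℝ) - (z'.1 i : ℝ)|) + ∑ j, d j * |(z.2 j : ℝ) - (z'.2 j : ℝ)|)
    -- (A2): stochastic monotonicity of `|X|` in `v`
    (hA2 : ∀ v v' : NNReal, v < v' → ∀ k : ℕ,
      Q v' {x : ℤ | x.natAbs ≤ k} ≤ Q v {x : ℤ | x.natAbs ≤ k})
    -- weights as in Lemma 2.1
    (γ : Fin (p + 1) → ℝ) (δ : Fin (q + 1) → ℝ) (κ : ℝ)
    (hγ : ∀ i, 0 < γ i) (hδ : ∀ j, 0 < δ j) (hκ : κ < 1)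
    (hcontr : ∀ (y : Fin (p + 1) → ℝ) (w : Fin (q + 1) → ℝ),
      (∀ i, 0 ≤ y i) → (∀ j, 0 ≤ w j) →
      (γ 0 + δ 0) * ((∑ i, c i * y i) + ∑ j, d j * w j)
          + (∑ i : Fin p, γ i.succ * y i.castSucc) + (∑ j : Fin q, δ j.succ * w j.castSucc)
        ≤ κ * ((∑ i, γ i * y i) + ∑ j, δ j * w j)) :
    ∀ z z' : GState p q, ∃ ξ : Measure (GState p q × GState p q),
      IsProbabilityMeasure ξ ∧
      ξ.map Prod.fst = piZ f Q z ∧ ξ.map Prod.snd = piZ f Q z' ∧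
      ∫⁻ u, ENNReal.ofReal (Delta γ δ u.1 u.2) ∂ξ ≤ ENNReal.ofReal (κ * Delta γ δ z z') :=
  stmt1_general f Q hQmom c d hA1 hA2 γ δ κ hγ hδ hcontr
end

section
/- Let ((X_t, v_t))_{t∈ℤ} be a strictly stationary Skellam-ARCH(p) process with parameters ω ≥ 0 and non-negative α_1,…,α_p. If α = ∑_{i=1}^p α_i < 1, then E[X_0²] < ∞; in fact E[X_0²] ≤ ω/(1−α). -/
/-!
Conditioning on the past gives `E[X₀²] = E[v₀] = ω + α E[X₀²]`, which yields the bound as soon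
as `E[X₀²] < ∞`. Finiteness is the real content. With `γ = α^(1/p) < 1` there are weights `eᵢ`
for which `L = ∑ eᵢ X₋ᵢ²` satisfies `E[min(L, M)] ≤ e₀ ω + E[min(γ L, M)]` at every truncation
level `M`: the conditional Skellam law of `X₀` has second moment `v₀`, `min(·, M)` is concave, and
stationarity moves `L` one step back. Iterating gives
`E[min(L, M)] ≤ e₀ ω / (1 - γ) + E[min(γᵏ L, M)]`, and the last term vanishes by dominated
convergence.
-/

open MeasureTheory ProbabilityTheory ENNReal

/-- The Skellam distribution `Skellam(μ₁, μ₂)`: the law of `N₁ - N₂` for independent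
`N₁ ∼ Poisson(μ₁)`, `N₂ ∼ Poisson(μ₂)`. -/
noncomputable def skellam (μ1 μ2 : NNReal) : Measure ℤ :=
  ((poissonMeasure μ1).prod (poissonMeasure μ2)).map (fun nm => (nm.1 : ℤ) - (nm.2 : ℤ))

open NNReal Filter Topology

namespace ProbabilityTheory

lemma natCast_succ_mul_poissonMeasure_singleton (r : NNReal) (n : ℕ) :
    ((n + 1 : ℕ) : ℝ≥0∞) * poissonMeasure r {n + 1} = r * poissonMeasure r {n} := by
  rw [poissonMeasure_singleton, poissonMeasure_singleton, ← ofReal_natCast, ← ofReal_coe_nnreal,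
    ← ofReal_mul (by positivity), ← ofReal_mul (by positivity), Nat.factorial_succ]
  congr 1
  push_cast
  field_simp
  ring

lemma lintegral_natCast_mul_poissonMeasure (r : NNReal) (f : ℕ → ℝ≥0∞) :
    ∫⁻ n, n * f n ∂poissonMeasure r = r * ∫⁻ n, f (n + 1) ∂poissonMeasure r := by
  rw [lintegral_countable', lintegral_countable', tsum_eq_zero_add' ENNReal.summable,
    ← ENNReal.tsum_mul_left]
  simp only [Nat.cast_zero, zero_mul, zero_add]
  refine tsum_congr fun n => ?_
  rw [mul_right_comm, natCast_succ_mul_poissonMeasure_singleton]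
  ring

lemma lintegral_natCast_poissonMeasure (r : NNReal) : ∫⁻ n, (n : ℝ≥0∞) ∂poissonMeasure r = r := by
  simpa using lintegral_natCast_mul_poissonMeasure r 1

lemma lintegral_natCast_sq_poissonMeasure (r : NNReal) :
    ∫⁻ n, (n : ℝ≥0∞) ^ 2 ∂poissonMeasure r = r ^ 2 + r := by
  simp_rw [sq, lintegral_natCast_mul_poissonMeasure r Nat.cast, Nat.cast_succ]
  rw [lintegral_add_right _ measurable_const, lintegral_natCast_poissonMeasure]
  simp [mul_add]

end ProbabilityTheory

instance isProbabilityMeasure_skellam (μ1 μ2 : NNReal) : IsProbabilityMeasure (skellam μ1 μ2) :=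
  Measure.isProbabilityMeasure_map (measurable_of_countable _).aemeasurable

-- `2 μ₁ μ₂` sits on the left because subtraction in `ℝ≥0∞` truncates.
lemma lintegral_natAbs_sq_skellam_add (μ1 μ2 : NNReal) :
    ∫⁻ k, (k.natAbs : ℝ≥0∞) ^ 2 ∂skellam μ1 μ2 + 2 * (μ1 * μ2)
      = μ1 ^ 2 + μ1 + (μ2 ^ 2 + μ2) := by
  have hsq (n m : ℕ) : (((n : ℤ) - m).natAbs : ℝ≥0∞) ^ 2 + 2 * (n * m) = n ^ 2 + m ^ 2 := by
    have : (((n : ℤ) - m).natAbs) ^ 2 + 2 * (n * m) = n ^ 2 + m ^ 2 := by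
      zify
      rw [sq_abs]
      ring
    exact_mod_cast this
  have hprod : (μ1 * μ2 : ℝ≥0∞)
      = ∫⁻ nm : ℕ × ℕ, nm.1 * nm.2 ∂(poissonMeasure μ1).prod (poissonMeasure μ2) := by
    rw [lintegral_prod_mul (measurable_of_countable _).aemeasurable
      (measurable_of_countable _).aemeasurable, lintegral_natCast_poissonMeasure,
      lintegral_natCast_poissonMeasure]
  rw [skellam, lintegral_map (measurable_of_countable _) (measurable_of_countable _), hprod,
    ← lintegral_const_mul _ (measurable_of_countable _),
    ← lintegral_add_left (measurable_of_countable _)]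
  simp_rw [hsq]
  rw [lintegral_add_left (measurable_of_countable _),
    lintegral_prod _ (measurable_of_countable _).aemeasurable,
    lintegral_prod _ (measurable_of_countable _).aemeasurable]
  simp [lintegral_natCast_sq_poissonMeasure]

lemma lintegral_natAbs_sq_skellam_half (r : NNReal) :
    ∫⁻ k, (k.natAbs : ℝ≥0∞) ^ 2 ∂skellam (r / 2) (r / 2) = r := by
  have h := lintegral_natAbs_sq_skellam_add (r / 2) (r / 2)
  have hr : ((r / 2 : NNReal) : ℝ≥0∞) + (r / 2 : NNReal) = r := by
    rw [← coe_add, add_halves]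
  refine (ENNReal.add_left_inj (a := 2 * ((r / 2 : NNReal) * (r / 2 : NNReal)))
    (by finiteness)).1 ?_
  rw [h, ← hr]
  ring

namespace MeasureTheory

section condLExp

variable {Ω : Type*} {m mΩ : MeasurableSpace Ω} {μ : Measure Ω}

lemma lintegral_condLExp_mul (hm : m ≤ mΩ) [SigmaFinite (μ.trim hm)] {g f : Ω → ℝ≥0∞}
    (hg : AEMeasurable g μ) (hf : Measurable[m] f) :
    ∫⁻ ω, μ⁻[g|m] ω * f ω ∂μ = ∫⁻ ω, g ω * f ω ∂μ := by
  have htrim : (μ.withDensity μ⁻[g|m]).trim hm = (μ.withDensity g).trim hm := by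
    refine @Measure.ext _ m _ _ fun s hs => ?_
    rw [trim_measurableSet_eq hm hs, trim_measurableSet_eq hm hs, withDensity_apply _ (hm s hs),
      withDensity_apply _ (hm s hs), setLIntegral_condLExp hm μ g hs]
  have hf' : Measurable f := hf.mono hm le_rfl
  calc ∫⁻ ω, μ⁻[g|m] ω * f ω ∂μ = ∫⁻ ω, f ω ∂(μ.withDensity μ⁻[g|m]).trim hm := by
        rw [lintegral_trim hm hf,
          lintegral_withDensity_eq_lintegral_mul₀ (by fun_prop) hf'.aemeasurable]
        rfl
    _ = ∫⁻ ω, g ω * f ω ∂μ := by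
        rw [htrim, lintegral_trim hm hf,
          lintegral_withDensity_eq_lintegral_mul₀ hg hf'.aemeasurable]
        rfl

theorem lintegral_comp_eq_lintegral_lintegral_of_condExp {α : Type*} [MeasurableSpace α]
    [MeasurableSingletonClass α] [Countable α] (hm : m ≤ mΩ) [IsFiniteMeasure μ] {Z : Ω → α}
    (hZ : Measurable Z) {κ : Ω → Measure α} [∀ ω, IsFiniteMeasure (κ ω)]
    (hκ : ∀ a, (fun ω => (κ ω {a}).toReal)
      =ᵐ[μ] μ[fun ω => ({a} : Set α).indicator (fun _ => (1 : ℝ)) (Z ω) | m])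
    {Φ : α → Ω → ℝ≥0∞} (hΦ : ∀ a, Measurable[m] (Φ a)) :
    ∫⁻ ω, Φ (Z ω) ω ∂μ = ∫⁻ ω, ∫⁻ a, Φ a ω ∂κ ω ∂μ := by
  classical
  set ind : α → Ω → ℝ := fun a ω => ({a} : Set α).indicator (fun _ => (1 : ℝ)) (Z ω)
  have hind (a : α) (ω : Ω) : ENNReal.ofReal (ind a ω) = if Z ω = a then 1 else 0 := by
    by_cases h : Z ω = a <;> simp [ind, h]
  have hmeas (a : α) : Measurable fun ω => ENNReal.ofReal (ind a ω) := by
    simp_rw [hind]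
    exact Measurable.ite (hZ (measurableSet_singleton a)) measurable_const measurable_const
  have hκ' (a : α) : (fun ω => κ ω {a}) =ᵐ[μ] μ⁻[fun ω => ENNReal.ofReal (ind a ω)|m] := by
    have hint : Integrable (ind a) μ :=
      (integrable_const (1 : ℝ)).indicator (hZ (measurableSet_singleton a))
    filter_upwards [hκ a, condLExp_ofReal m hint (Filter.Eventually.of_forall fun ω =>
      Set.indicator_nonneg (fun _ _ => zero_le_one) _)] with ω h1 h2
    rw [h2, ← h1, ofReal_toReal (measure_ne_top _ _)]
  have hΦ' (a : α) : Measurable (Φ a) := (hΦ a).mono hm le_rfl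
  calc ∫⁻ ω, Φ (Z ω) ω ∂μ
      = ∑' a, ∫⁻ ω, ENNReal.ofReal (ind a ω) * Φ a ω ∂μ := by
        rw [← lintegral_tsum fun a => ((hmeas a).fun_mul (hΦ' a)).aemeasurable]
        simp [hind]
    _ = ∑' a, ∫⁻ ω, κ ω {a} * Φ a ω ∂μ := by
        refine tsum_congr fun a => ?_
        rw [← lintegral_condLExp_mul hm (hmeas a).aemeasurable (hΦ a)]
        exact lintegral_congr_ae ((hκ' a).mono fun ω h => by simp only [h])
    _ = ∫⁻ ω, ∫⁻ a, Φ a ω ∂κ ω ∂μ := by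
        rw [← lintegral_tsum fun a =>
          ((measurable_condLExp' m μ _).aemeasurable.congr (hκ' a).symm).fun_mul
            (hΦ' a).aemeasurable]
        simp_rw [lintegral_countable', mul_comm]

end condLExp

section truncation

variable {Ω : Type*} [MeasurableSpace Ω] {μ : Measure Ω}

lemma lintegral_eq_iSup_lintegral_min_natCast {W : Ω → ℝ≥0∞} (hW : Measurable W) :
    ∫⁻ ω, W ω ∂μ = ⨆ n : ℕ, ∫⁻ ω, min (W ω) n ∂μ := by
  rw [← lintegral_iSup (fun n => hW.min measurable_const)
    fun i j hij ω => min_le_min_left _ (by exact_mod_cast hij)]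
  congr with ω
  rw [← inf_iSup_eq, iSup_natCast, inf_top_eq]

lemma lintegral_min_le_sum_add_lintegral_min_pow_mul {W : Ω → ℝ≥0∞} {c γ : ℝ≥0∞}
    (hγ₀ : γ ≠ 0) (hγ_top : γ ≠ ∞)
    (h : ∀ M, ∫⁻ ω, min (W ω) M ∂μ ≤ c + ∫⁻ ω, min (γ * W ω) M ∂μ) (k : ℕ) (M : ℝ≥0∞) :
    ∫⁻ ω, min (W ω) M ∂μ
      ≤ (∑ j ∈ Finset.range k, γ ^ j) * c + ∫⁻ ω, min (γ ^ k * W ω) M ∂μ := by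
  have step (k : ℕ) : ∫⁻ ω, min (γ ^ k * W ω) M ∂μ
      ≤ γ ^ k * c + ∫⁻ ω, min (γ ^ (k + 1) * W ω) M ∂μ := by
    have hk₀ : γ ^ k ≠ 0 := pow_ne_zero k hγ₀
    have hk_top : γ ^ k ≠ ∞ := pow_ne_top hγ_top
    have hrescale (V : Ω → ℝ≥0∞) :
        ∫⁻ ω, min (γ ^ k * V ω) M ∂μ = γ ^ k * ∫⁻ ω, min (V ω) (M / γ ^ k) ∂μ := by
      rw [← lintegral_const_mul' _ _ hk_top]
      simp_rw [mul_min, ENNReal.mul_div_cancel hk₀ hk_top]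
    calc ∫⁻ ω, min (γ ^ k * W ω) M ∂μ = γ ^ k * ∫⁻ ω, min (W ω) (M / γ ^ k) ∂μ := hrescale W
      _ ≤ γ ^ k * (c + ∫⁻ ω, min (γ * W ω) (M / γ ^ k) ∂μ) := by gcongr; exact h _
      _ = γ ^ k * c + ∫⁻ ω, min (γ ^ (k + 1) * W ω) M ∂μ := by
        rw [mul_add, ← hrescale]
        simp_rw [pow_succ, mul_assoc]
  induction k with
  | zero => simp
  | succ k ih =>
    refine ih.trans ?_
    rw [Finset.sum_range_succ, add_mul, add_assoc]
    gcongr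
    exact step k

lemma tendsto_lintegral_min_pow_mul [IsFiniteMeasure μ] {W : Ω → ℝ≥0∞} (hW : Measurable W)
    (hW_ne_top : ∀ᵐ ω ∂μ, W ω ≠ ∞) {γ : ℝ≥0∞} (hγ₁ : γ < 1) {M : ℝ≥0∞} (hM : M ≠ ∞) :
    Tendsto (fun k : ℕ => ∫⁻ ω, min (γ ^ k * W ω) M ∂μ) atTop (𝓝 0) := by
  have := tendsto_lintegral_of_dominated_convergence (F := fun k ω => min (γ ^ k * W ω) M)
    (f := fun _ => 0) (fun _ => M)
    (fun k => (hW.const_mul _).min measurable_const)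
    (fun k => ae_of_all _ fun ω => min_le_right _ _)
    (by simpa using mul_ne_top hM (measure_ne_top μ _))
    (hW_ne_top.mono fun ω hω => ?_)
  · simpa using this
  · simpa using (ENNReal.Tendsto.mul_const
      (ENNReal.tendsto_pow_atTop_nhds_zero_of_lt_one hγ₁) (Or.inr hω)).min tendsto_const_nhds

lemma lintegral_le_div_of_lintegral_min_le [IsFiniteMeasure μ] {W : Ω → ℝ≥0∞}
    (hW : Measurable W) (hW_ne_top : ∀ᵐ ω ∂μ, W ω ≠ ∞) {c γ : ℝ≥0∞} (hγ₀ : γ ≠ 0) (hγ₁ : γ < 1)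
    (h : ∀ M, ∫⁻ ω, min (W ω) M ∂μ ≤ c + ∫⁻ ω, min (γ * W ω) M ∂μ) :
    ∫⁻ ω, W ω ∂μ ≤ c / (1 - γ) := by
  have hsum (k : ℕ) : (∑ j ∈ Finset.range k, γ ^ j) * c ≤ c / (1 - γ) := by
    rw [div_eq_mul_inv, mul_comm c, ← ENNReal.tsum_geometric]
    gcongr
    exact ENNReal.sum_le_tsum _
  have hbound (M : ℝ≥0∞) (hM : M ≠ ∞) : ∫⁻ ω, min (W ω) M ∂μ ≤ c / (1 - γ) := by
    refine ge_of_tendsto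
      (by simpa using (tendsto_lintegral_min_pow_mul hW hW_ne_top hγ₁ hM).const_add (c / (1 - γ)))
      (Eventually.of_forall fun k => ?_)
    grw [lintegral_min_le_sum_add_lintegral_min_pow_mul hγ₀ (hγ₁.trans one_lt_top).ne h k M,
      hsum k]
  rw [lintegral_eq_iSup_lintegral_min_natCast hW]
  exact iSup_le fun n => hbound n (natCast_ne_top n)

end truncation

end MeasureTheory

lemma exists_drift_weights {p : ℕ} (a : Fin p → ℝ≥0) (h₀ : ∑ i, a i ≠ 0) (h₁ : ∑ i, a i < 1) :
    ∃ (γ : ℝ≥0) (e : ℕ → ℝ≥0), γ ≠ 0 ∧ γ < 1 ∧ e 0 ≠ 0 ∧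
      ∀ i : Fin p, e 0 * a i + e (i + 1) ≤ γ * e i := by
  have hp : p ≠ 0 := by rintro rfl; simp at h₀
  set γ : ℝ≥0 := (∑ i, a i) ^ ((p : ℝ)⁻¹)
  have hγ₀ : γ ≠ 0 := (NNReal.rpow_pos (pos_iff_ne_zero.2 h₀)).ne'
  have hγ₁ : γ < 1 := NNReal.rpow_lt_one h₁ (by positivity)
  set b : Fin p → ℝ≥0 := fun j => a j / γ ^ ((j : ℕ) + 1)
  set tail : ℕ → ℝ≥0 := fun i => ∑ j : Fin p, if i ≤ (j : ℕ) then b j else 0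
  have htail (i : Fin p) : tail i = b i + tail ((i : ℕ) + 1) := by
    have (j : Fin p) : (if (i : ℕ) ≤ j then b j else 0)
        = (if i = j then b j else 0) + (if (i : ℕ) + 1 ≤ j then b j else 0) := by
      rcases lt_trichotomy (i : ℕ) j with h | h | h
      · simp [h.le, h, Fin.ne_of_lt h]
      · simp [Fin.ext h]
      · simp [h.not_ge, (Fin.ne_of_lt h).symm, (Nat.lt_succ_of_lt h).not_ge]
    simp only [tail, this, Finset.sum_add_distrib, Finset.sum_ite_eq, Finset.mem_univ, if_true]
  -- `eᵢ = γ^i ∑_{j ≥ i} aⱼ / γ^(j+1)`, so that `γ eᵢ = aᵢ + eᵢ₊₁` and `e₀ ≤ ∑ aⱼ / γ^p = 1`.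
  refine ⟨γ, fun i => γ ^ i * tail i, hγ₀, hγ₁, ?_, fun i => ?_⟩
  · obtain ⟨j, -, hj⟩ := Finset.exists_ne_zero_of_sum_ne_zero h₀
    simpa [tail, Finset.sum_eq_zero_iff, b, hγ₀] using ⟨j, hj⟩
  · have he₀ : tail 0 ≤ 1 := by
      calc tail 0 ≤ ∑ j, a j / γ ^ p := by
            refine Finset.sum_le_sum fun j _ => ?_
            simp only [zero_le, if_true, b]
            exact div_le_div_of_nonneg_left zero_le (pow_pos (pos_iff_ne_zero.2 hγ₀) _)
              (pow_le_pow_of_le_one zero_le hγ₁.le (by omega))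
        _ = 1 := by rw [← Finset.sum_div, NNReal.rpow_inv_natCast_pow _ hp, div_self h₀]
    calc γ ^ 0 * tail 0 * a i + γ ^ ((i : ℕ) + 1) * tail ((i : ℕ) + 1)
        ≤ a i + γ ^ ((i : ℕ) + 1) * tail ((i : ℕ) + 1) := by
          gcongr
          simpa using mul_le_of_le_one_left zero_le he₀
      _ = γ * (γ ^ (i : ℕ) * tail i) := by
          rw [htail, ← mul_assoc, ← pow_succ', mul_add, mul_div_cancel₀ _ (pow_ne_zero _ hγ₀)]

lemma le_div_one_sub_of_le_add_mul {M w a : ℝ≥0∞} (hM : M ≠ ∞) (ha : a < 1)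
    (h : M ≤ w + a * M) : M ≤ w / (1 - a) := by
  rw [ENNReal.le_div_iff_mul_le (Or.inl (tsub_pos_of_lt ha).ne') (Or.inl (by finiteness)),
    ENNReal.mul_sub fun _ _ => hM, mul_one, tsub_le_iff_right, mul_comm]
  exact h

lemma lintegral_min_skellam_le (c r M : ℝ≥0∞) (v : ℝ≥0) :
    ∫⁻ k, min (c * (k.natAbs : ℝ≥0∞) ^ 2 + r) M ∂skellam (v / 2) (v / 2) ≤ min (c * v + r) M := by
  refine le_min ((lintegral_mono fun k => min_le_left _ _).trans_eq ?_)
    ((lintegral_mono fun k => min_le_right _ _).trans_eq (by simp))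
  rw [lintegral_add_right _ measurable_const, lintegral_const_mul _ (measurable_of_countable _),
    lintegral_natAbs_sq_skellam_half]
  simp

-- Summing up to `p` rather than `p - 1` makes `lyapunov_eq_add_sum` split off exactly the `p`
-- lags that enter `v₀`, with no condition on `e p`.
noncomputable def lyapunov (e : ℕ → ℝ≥0) (p : ℕ) (x : ℤ → ℤ) : ℝ≥0∞ :=
  ∑ i ∈ Finset.range (p + 1), e i * ((x (-i)).natAbs : ℝ≥0∞) ^ 2

section lyapunov

variable {e : ℕ → ℝ≥0} {p : ℕ}

lemma measurable_lyapunov : Measurable (lyapunov e p) :=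
  Finset.measurable_sum _ fun _ _ =>
    ((measurable_of_countable fun k : ℤ => (k.natAbs : ℝ≥0∞) ^ 2).comp
      (measurable_pi_apply _)).const_mul _

lemma lyapunov_eq_add_sum (x : ℤ → ℤ) : lyapunov e p x
    = e 0 * ((x 0).natAbs : ℝ≥0∞) ^ 2
      + ∑ i : Fin p, e (i + 1) * ((x (-1 - i)).natAbs : ℝ≥0∞) ^ 2 := by
  rw [lyapunov, Finset.sum_range_succ', add_comm,
    Fin.sum_univ_eq_sum_range (fun i => e (i + 1) * ((x (-1 - i)).natAbs : ℝ≥0∞) ^ 2)]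
  congr! 5 with i
  congr 2
  push_cast
  ring

lemma lyapunov_ne_top (x : ℤ → ℤ) : lyapunov e p x ≠ ∞ :=
  ENNReal.sum_ne_top.2 fun _ _ => mul_ne_top coe_ne_top (pow_ne_top (natCast_ne_top _))

lemma add_sum_le_lyapunov_shift {w γ : ℝ≥0} {α : Fin p → ℝ≥0}
    (hdrift : ∀ i : Fin p, e 0 * α i + e (i + 1) ≤ γ * e i) (x : ℤ → ℤ) :
    e 0 * (w + ∑ i : Fin p, α i * ((x (-1 - i)).natAbs : ℝ≥0∞) ^ 2)
      + ∑ i : Fin p, e (i + 1) * ((x (-1 - i)).natAbs : ℝ≥0∞) ^ 2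
      ≤ e 0 * w + γ * lyapunov e p (fun s => x (s + -1)) := by
  have hshift : ∑ i : Fin p, (e i : ℝ≥0∞) * ((x (-1 - i)).natAbs : ℝ≥0∞) ^ 2
      ≤ lyapunov e p (fun s => x (s + -1)) := by
    calc ∑ i : Fin p, (e i : ℝ≥0∞) * ((x (-1 - i)).natAbs : ℝ≥0∞) ^ 2
        = ∑ i ∈ Finset.range p, (e i : ℝ≥0∞) * ((x (-1 - i)).natAbs : ℝ≥0∞) ^ 2 :=
          Fin.sum_univ_eq_sum_range (fun i => (e i : ℝ≥0∞) * ((x (-1 - i)).natAbs : ℝ≥0∞) ^ 2) p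
      _ ≤ ∑ i ∈ Finset.range (p + 1), (e i : ℝ≥0∞) * ((x (-1 - i)).natAbs : ℝ≥0∞) ^ 2 :=
          Finset.sum_le_sum_of_subset (Finset.range_subset_range.2 p.le_succ)
      _ = lyapunov e p (fun s => x (s + -1)) := by simp only [lyapunov, neg_add_eq_sub]
  calc e 0 * (w + ∑ i : Fin p, α i * ((x (-1 - i)).natAbs : ℝ≥0∞) ^ 2)
        + ∑ i : Fin p, e (i + 1) * ((x (-1 - i)).natAbs : ℝ≥0∞) ^ 2
      = e 0 * w + ∑ i : Fin p, ((e 0 * α i + e (i + 1) : ℝ≥0) : ℝ≥0∞)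
          * ((x (-1 - i)).natAbs : ℝ≥0∞) ^ 2 := by
        rw [mul_add, Finset.mul_sum, add_assoc, ← Finset.sum_add_distrib]
        push_cast
        simp only [mul_assoc, add_mul]
    _ ≤ e 0 * w + ∑ i : Fin p, ((γ * e i : ℝ≥0) : ℝ≥0∞) * ((x (-1 - i)).natAbs : ℝ≥0∞) ^ 2 := by
        gcongr with i
        exact hdrift i
    _ ≤ e 0 * w + γ * lyapunov e p (fun s => x (s + -1)) := by
        simp only [coe_mul, mul_assoc, ← Finset.mul_sum]
        gcongr

end lyapunov

abbrev pastMeasurableSpace {Ω : Type*} [MeasurableSpace Ω] (X : ℤ → Ω → ℤ) (v : ℤ → Ω → ℝ≥0)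
    (t : ℤ) : MeasurableSpace Ω :=
  ⨆ (s : ℤ) (_ : s ≤ t - 1), MeasurableSpace.comap (fun ω => (X s ω, v s ω)) inferInstance

structure IsSkellamARCH {Ω : Type*} [MeasurableSpace Ω] {p : ℕ} (μ : Measure Ω) (w : ℝ≥0)
    (α : Fin p → ℝ≥0) (X : ℤ → Ω → ℤ) (v : ℤ → Ω → ℝ≥0) : Prop where
  measurable_X : ∀ t, Measurable (X t)
  measurable_v : ∀ t, Measurable (v t)
  map_shift : ∀ t : ℤ, μ.map (fun ω (s : ℤ) => (X (s + t) ω, v (s + t) ω))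
    = μ.map (fun ω (s : ℤ) => (X s ω, v s ω))
  v_eq : ∀ t ω, v t ω = w + ∑ i : Fin p, α i * (((X (t - 1 - (i : ℕ)) ω).natAbs ^ 2 : ℕ) : ℝ≥0)
  condExp_indicator : ∀ t (A : Set ℤ), MeasurableSet A →
    (fun ω => ((skellam (v t ω / 2) (v t ω / 2)) A).toReal)
      =ᵐ[μ] μ[fun ω => A.indicator (fun _ => (1 : ℝ)) (X t ω) | pastMeasurableSpace X v t]

section past

variable {Ω : Type*} [MeasurableSpace Ω] {X : ℤ → Ω → ℤ} {v : ℤ → Ω → ℝ≥0}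

lemma pastMeasurableSpace_le (hX : ∀ t, Measurable (X t)) (hv : ∀ t, Measurable (v t)) (t : ℤ) :
    pastMeasurableSpace X v t ≤ ‹MeasurableSpace Ω› :=
  iSup₂_le fun s _ => ((hX s).prodMk (hv s)).comap_le

lemma measurable_pastMeasurableSpace {s t : ℤ} (hst : s ≤ t - 1) :
    Measurable[pastMeasurableSpace X v t] (X s) :=
  measurable_fst.comp (Measurable.of_comap_le (le_iSup₂ (f := fun s (_ : s ≤ t - 1) =>
    MeasurableSpace.comap (fun ω => (X s ω, v s ω)) inferInstance) s hst))

end past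

namespace IsSkellamARCH

variable {Ω : Type*} [MeasurableSpace Ω] {μ : Measure Ω} {p : ℕ} {w : ℝ≥0} {α : Fin p → ℝ≥0}
  {X : ℤ → Ω → ℤ} {v : ℤ → Ω → ℝ≥0}

lemma lintegral_comp_shift (h : IsSkellamARCH μ w α X v) (t : ℤ) {F : (ℤ → ℤ) → ℝ≥0∞}
    (hF : Measurable F) :
    ∫⁻ ω, F (fun s => X (s + t) ω) ∂μ = ∫⁻ ω, F (fun s => X s ω) ∂μ := by
  have hpath (t : ℤ) : Measurable fun ω (s : ℤ) => (X (s + t) ω, v (s + t) ω) :=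
    measurable_pi_lambda _ fun s => (h.measurable_X _).prodMk (h.measurable_v _)
  have hG : Measurable fun y : ℤ → ℤ × ℝ≥0 => F fun s => (y s).1 :=
    hF.comp (measurable_pi_lambda _ fun s => measurable_fst.comp (measurable_pi_apply s))
  have := lintegral_map (μ := μ) hG (hpath t)
  simpa [← lintegral_map hG (by simpa using hpath 0), h.map_shift t] using this.symm

lemma lintegral_natAbs_sq_eq (h : IsSkellamARCH μ w α X v) (t : ℤ) :
    ∫⁻ ω, ((X t ω).natAbs : ℝ≥0∞) ^ 2 ∂μ = ∫⁻ ω, ((X 0 ω).natAbs : ℝ≥0∞) ^ 2 ∂μ := by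
  simpa using h.lintegral_comp_shift t (F := fun x => ((x 0).natAbs : ℝ≥0∞) ^ 2)
    ((measurable_of_countable fun k : ℤ => (k.natAbs : ℝ≥0∞) ^ 2).comp (measurable_pi_apply 0))

lemma lintegral_comp_eq_lintegral_skellam (h : IsSkellamARCH μ w α X v) [IsFiniteMeasure μ]
    (t : ℤ) {Φ : ℤ → Ω → ℝ≥0∞} (hΦ : ∀ k, Measurable[pastMeasurableSpace X v t] (Φ k)) :
    ∫⁻ ω, Φ (X t ω) ω ∂μ = ∫⁻ ω, ∫⁻ k, Φ k ω ∂skellam (v t ω / 2) (v t ω / 2) ∂μ :=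
  lintegral_comp_eq_lintegral_lintegral_of_condExp
    (pastMeasurableSpace_le h.measurable_X h.measurable_v t) (h.measurable_X t)
    (fun k => h.condExp_indicator t {k} (measurableSet_singleton k)) hΦ

lemma coe_v_eq (h : IsSkellamARCH μ w α X v) (t : ℤ) (ω : Ω) :
    (v t ω : ℝ≥0∞) = w + ∑ i : Fin p, α i * ((X (t - 1 - i) ω).natAbs : ℝ≥0∞) ^ 2 := by
  rw [h.v_eq]
  push_cast
  rfl

lemma lintegral_natAbs_sq_eq_add_mul (h : IsSkellamARCH μ w α X v) [IsProbabilityMeasure μ] :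
    ∫⁻ ω, ((X 0 ω).natAbs : ℝ≥0∞) ^ 2 ∂μ
      = w + ((∑ i, α i : ℝ≥0) : ℝ≥0∞) * ∫⁻ ω, ((X 0 ω).natAbs : ℝ≥0∞) ^ 2 ∂μ := by
  have hY (t : ℤ) : Measurable fun ω => ((X t ω).natAbs : ℝ≥0∞) ^ 2 :=
    (measurable_of_countable fun k : ℤ => (k.natAbs : ℝ≥0∞) ^ 2).comp (h.measurable_X t)
  calc ∫⁻ ω, ((X 0 ω).natAbs : ℝ≥0∞) ^ 2 ∂μ
      = ∫⁻ ω, ∫⁻ k, (k.natAbs : ℝ≥0∞) ^ 2 ∂skellam (v 0 ω / 2) (v 0 ω / 2) ∂μ :=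
        h.lintegral_comp_eq_lintegral_skellam 0 (Φ := fun k _ => (k.natAbs : ℝ≥0∞) ^ 2)
          fun _ => measurable_const
    _ = ∫⁻ ω, w + ∑ i : Fin p, α i * ((X (0 - 1 - i) ω).natAbs : ℝ≥0∞) ^ 2 ∂μ := by
        simp_rw [lintegral_natAbs_sq_skellam_half, h.coe_v_eq]
    _ = w + ((∑ i, α i : ℝ≥0) : ℝ≥0∞) * ∫⁻ ω, ((X 0 ω).natAbs : ℝ≥0∞) ^ 2 ∂μ := by
        rw [lintegral_add_left measurable_const, lintegral_const, measure_univ, mul_one,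
          lintegral_finsetSum _ fun i _ => (hY _).const_mul _]
        simp_rw [lintegral_const_mul _ (hY _), h.lintegral_natAbs_sq_eq, ← Finset.sum_mul]
        push_cast
        rfl

lemma lintegral_min_lyapunov_le (h : IsSkellamARCH μ w α X v) [IsProbabilityMeasure μ]
    {γ : ℝ≥0} {e : ℕ → ℝ≥0} (hdrift : ∀ i : Fin p, e 0 * α i + e (i + 1) ≤ γ * e i)
    (M : ℝ≥0∞) :
    ∫⁻ ω, min (lyapunov e p fun s => X s ω) M ∂μ
      ≤ e 0 * w + ∫⁻ ω, min (γ * lyapunov e p fun s => X s ω) M ∂μ := by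
  set R : Ω → ℝ≥0∞ := fun ω => ∑ i : Fin p, e (i + 1) * ((X (-1 - i) ω).natAbs : ℝ≥0∞) ^ 2
  have hR : Measurable[pastMeasurableSpace X v 0] R :=
    Finset.measurable_sum _ fun i _ =>
      ((measurable_of_countable fun k : ℤ => (k.natAbs : ℝ≥0∞) ^ 2).comp
        (measurable_pastMeasurableSpace (by omega))).const_mul _
  calc ∫⁻ ω, min (lyapunov e p fun s => X s ω) M ∂μ
      = ∫⁻ ω, min (e 0 * ((X 0 ω).natAbs : ℝ≥0∞) ^ 2 + R ω) M ∂μ := by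
        simp_rw [lyapunov_eq_add_sum]
        rfl
    _ = ∫⁻ ω, ∫⁻ k, min (e 0 * (k.natAbs : ℝ≥0∞) ^ 2 + R ω) M
          ∂skellam (v 0 ω / 2) (v 0 ω / 2) ∂μ :=
        h.lintegral_comp_eq_lintegral_skellam 0
          (Φ := fun k ω => min (e 0 * (k.natAbs : ℝ≥0∞) ^ 2 + R ω) M)
          fun _ => (measurable_const.add hR).min measurable_const
    _ ≤ ∫⁻ ω, min (e 0 * v 0 ω + R ω) M ∂μ :=
        lintegral_mono fun ω => lintegral_min_skellam_le _ _ _ _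
    _ ≤ ∫⁻ ω, min (e 0 * w + γ * lyapunov e p fun s => X (s + -1) ω) M ∂μ := by
        refine lintegral_mono fun ω => min_le_min_right _ ?_
        simpa [h.coe_v_eq] using add_sum_le_lyapunov_shift (w := w) hdrift (fun s => X s ω)
    _ ≤ ∫⁻ ω, e 0 * w + min (γ * lyapunov e p fun s => X (s + -1) ω) M ∂μ :=
        lintegral_mono fun ω => (min_le_min_left _ le_add_self).trans_eq (min_add_add_left _ _ _)
    _ = e 0 * w + ∫⁻ ω, min (γ * lyapunov e p fun s => X s ω) M ∂μ := by
        rw [lintegral_add_left measurable_const, lintegral_const, measure_univ, mul_one,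
          h.lintegral_comp_shift (-1) (F := fun x => min (γ * lyapunov e p x) M)
            ((measurable_lyapunov.const_mul _).min measurable_const)]

lemma lintegral_natAbs_sq_ne_top (h : IsSkellamARCH μ w α X v) [IsProbabilityMeasure μ]
    (hα : ∑ i, α i < 1) : ∫⁻ ω, ((X 0 ω).natAbs : ℝ≥0∞) ^ 2 ∂μ ≠ ∞ := by
  by_cases hα₀ : ∑ i, α i = 0
  · rw [h.lintegral_natAbs_sq_eq_add_mul, hα₀]
    simp
  obtain ⟨γ, e, hγ₀, hγ₁, he₀, hdrift⟩ := exists_drift_weights α hα₀ hα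
  have hpath : Measurable fun ω (s : ℤ) => X s ω := measurable_pi_lambda _ h.measurable_X
  have hL : ∫⁻ ω, lyapunov e p (fun s => X s ω) ∂μ ≤ e 0 * w / (1 - γ) :=
    lintegral_le_div_of_lintegral_min_le (measurable_lyapunov.comp hpath)
      (ae_of_all _ fun _ => lyapunov_ne_top _) (by exact_mod_cast hγ₀) (by exact_mod_cast hγ₁)
      (h.lintegral_min_lyapunov_le hdrift)
  have hY : e 0 * ∫⁻ ω, ((X 0 ω).natAbs : ℝ≥0∞) ^ 2 ∂μ ≤ e 0 * w / (1 - γ) := by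
    rw [← lintegral_const_mul' _ _ coe_ne_top]
    refine (lintegral_mono fun ω => ?_).trans hL
    rw [lyapunov_eq_add_sum]
    exact le_self_add
  refine (ENNReal.lt_top_of_mul_ne_top_right (ne_top_of_le_ne_top ?_ hY)
    (by exact_mod_cast he₀)).ne
  exact ENNReal.div_ne_top coe_ne_top (tsub_pos_of_lt (by exact_mod_cast hγ₁)).ne'

end IsSkellamARCH

/-- Lemma 4.1(i): for a strictly stationary Skellam-ARCH(p) process with
`α = ∑ αᵢ < 1`, one has `E[X₀²] < ∞`, in fact `E[X₀²] ≤ ω/(1-α)`. -/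
theorem stmt6 {Ω : Type*} [MeasurableSpace Ω] (μ : Measure Ω) [IsProbabilityMeasure μ]
    (p : ℕ) (w : NNReal) (α : Fin p → NNReal)
    (X : ℤ → Ω → ℤ) (v : ℤ → Ω → NNReal)
    (hX : ∀ t, Measurable (X t)) (hv : ∀ t, Measurable (v t))
    -- strict stationarity: the law of the path is shift-invariant
    (hstat : ∀ t : ℤ,
      μ.map (fun ω (s : ℤ) => (X (s + t) ω, v (s + t) ω))
        = μ.map (fun ω (s : ℤ) => (X s ω, v s ω)))
    -- `v_t = ω + ∑ᵢ αᵢ X_{t-i}²`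
    (hveq : ∀ (t : ℤ) (ω : Ω),
      v t ω = w + ∑ i : Fin p, α i * (((X (t - 1 - (i : ℕ)) ω).natAbs ^ 2 : ℕ) : NNReal))
    -- `X_t ∣ 𝓕_{t-1} ∼ Skellam(v_t/2, v_t/2)`
    (hcond : ∀ (t : ℤ) (A : Set ℤ), MeasurableSet A →
      (fun ω => ((skellam (v t ω / 2) (v t ω / 2)) A).toReal)
        =ᵐ[μ] μ[fun ω => A.indicator (fun _ => (1 : ℝ)) (X t ω)
          | ⨆ (s : ℤ) (_ : s ≤ t - 1),
              MeasurableSpace.comap (fun ω => (X s ω, v s ω)) inferInstance])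
    (hα : ∑ i, α i < 1) :
    (∫⁻ ω, ((X 0 ω).natAbs : ℝ≥0∞) ^ 2 ∂μ) < ⊤ ∧
    (∫⁻ ω, ((X 0 ω).natAbs : ℝ≥0∞) ^ 2 ∂μ) ≤ (w : ℝ≥0∞) / ((1 : ℝ≥0∞) - (∑ i, α i : NNReal)) := by
  have h : IsSkellamARCH μ w α X v := ⟨hX, hv, hstat, hveq, hcond⟩
  have hfin := h.lintegral_natAbs_sq_ne_top hα
  exact ⟨hfin.lt_top, le_div_one_sub_of_le_add_mul hfin (by exact_mod_cast hα)
    h.lintegral_natAbs_sq_eq_add_mul.le⟩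
end

section
/- Let Y be an integer-valued random variable whose probability mass function p(m) = P(Y = m) is symmetric about zero (p(−m) = p(m) for all m ∈ ℤ) and unimodal (p(m) ≥ p(m+1) for all m ≥ 0). Then for every l ∈ ℤ and every k ∈ ℕ₀, P(|Y| ≤ k) ≥ P(|Y + l| ≤ k). -/
lemma my_mono (p : ℤ → ℝ) (hmono : ∀ m : ℤ, 0 ≤ m → p (m + 1) ≤ p m) :
    ∀ a b : ℤ, 0 ≤ a → a ≤ b → p b ≤ p a := by
  intro a b ha hab
  obtain ⟨n, rfl⟩ := Int.le.dest hab
  induction n with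
  | zero => simp
  | succ m ih =>
    have : a + (↑(m + 1) : ℤ) = (a + m) + 1 := by push_cast; ring
    rw [this]
    exact (hmono (a + m) (by positivity)).trans (ih (by omega))

lemma my_neg_sum (p : ℤ → ℝ) (hsym : ∀ m : ℤ, p (-m) = p m) (a b : ℤ) :
    ∑ j ∈ Finset.Icc a b, p j = ∑ j ∈ Finset.Icc (-b) (-a), p j := by
  refine Finset.sum_bij' (fun j _ => -j) (fun j _ => -j) ?_ ?_ ?_ ?_ ?_ <;>
    simp_all [Finset.mem_Icc, hsym] <;> omega

/-- For an integer-valued random variable `Y` whose probability mass function `p` is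
symmetric about zero and unimodal, `P(|Y| ≤ k) ≥ P(|Y + l| ≤ k)` for all `l ∈ ℤ`, `k ∈ ℕ₀`.
Here `P(|Y| ≤ k) = ∑_{-k ≤ j ≤ k} p(j)` and
`P(|Y + l| ≤ k) = ∑_{-k-l ≤ j ≤ k-l} p(j)`. -/
theorem stmt11 (p : ℤ → ℝ) (hnn : ∀ m, 0 ≤ p m)
    (hsym : ∀ m : ℤ, p (-m) = p m)
    (hmono : ∀ m : ℤ, 0 ≤ m → p (m + 1) ≤ p m)
    (hsum : HasSum p 1)
    (l : ℤ) (k : ℕ) :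
    ∑ j ∈ Finset.Icc (-(k : ℤ) - l) ((k : ℤ) - l), p j
      ≤ ∑ j ∈ Finset.Icc (-(k : ℤ)) (k : ℤ), p j := by
  have key : ∀ l : ℤ, 0 ≤ l →
      ∑ j ∈ Finset.Icc (-(k : ℤ) - l) ((k : ℤ) - l), p j
        ≤ ∑ j ∈ Finset.Icc (-(k : ℤ)) (k : ℤ), p j := by
    intro l hl
    obtain ⟨nn, rfl⟩ := Int.le.dest hl
    rw [zero_add]; clear hl
    induction nn with
    | zero => simp
    | succ nnn ih =>
      have hcast : (↑(nnn + 1) : ℤ) = (nnn : ℤ) + 1 := by push_cast; ring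
      rw [hcast]
      set n : ℤ := (nnn : ℤ) with hn
      refine le_trans ?_ ih
      have h1 : Finset.Icc (-(k : ℤ) - (n + 1)) ((k : ℤ) - (n + 1))
          = insert (-(k : ℤ) - (n + 1)) (Finset.Icc (-(k : ℤ) - n) ((k : ℤ) - n - 1)) := by
        ext x; simp [Finset.mem_Icc, Finset.mem_insert]; omega
      have h2 : Finset.Icc (-(k : ℤ) - n) ((k : ℤ) - n)
          = insert ((k : ℤ) - n) (Finset.Icc (-(k : ℤ) - n) ((k : ℤ) - n - 1)) := by
        ext x; simp [Finset.mem_Icc, Finset.mem_insert]; omega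
      have hni1 : (-(k : ℤ) - (n + 1)) ∉ Finset.Icc (-(k : ℤ) - n) ((k : ℤ) - n - 1) := by
        simp only [Finset.mem_Icc]; omega
      have hni2 : ((k : ℤ) - n) ∉ Finset.Icc (-(k : ℤ) - n) ((k : ℤ) - n - 1) := by
        simp only [Finset.mem_Icc]; omega
      rw [h1, h2, Finset.sum_insert hni1, Finset.sum_insert hni2]
      have hend : p (-(k : ℤ) - (n + 1)) ≤ p ((k : ℤ) - n) := by
        have e1 : p (-(k : ℤ) - (n + 1)) = p ((k : ℤ) + n + 1) := by
          rw [← hsym ((k : ℤ) + n + 1)]; ring_nf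
        rcases le_or_gt 0 ((k : ℤ) - n) with h | h
        · rw [e1]; exact my_mono p hmono _ _ h (by omega)
        · have e2 : p ((k : ℤ) - n) = p (n - (k : ℤ)) := by
            rw [← hsym (n - (k : ℤ))]; ring_nf
          rw [e1, e2]; exact my_mono p hmono _ _ (by omega) (by omega)
      linarith
  rcases le_or_gt 0 l with hl | hl
  · exact key l hl
  · have := my_neg_sum p hsym (-(k : ℤ) - l) ((k : ℤ) - l)
    rw [this]
    have h : -((k : ℤ) - l) = -(k : ℤ) - (-l) ∧ -(-(k : ℤ) - l) = (k : ℤ) - (-l) := by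
      constructor <;> ring
    rw [h.1, h.2]
    exact key (-l) (by omega)
end

section
/- Let 0 < v < v', let X ∼ Skellam(v/2, v/2) and X' ∼ Skellam(v'/2, v'/2). Then |X| is stochastically not greater than |X'|: P(|X| ≤ k) ≥ P(|X'| ≤ k) for all k ∈ ℕ₀. -/
open MeasureTheory ProbabilityTheory ENNReal

/-!
Write `v' / 2 = v / 2 + s`. Since Poisson laws add under convolution,
`Skellam(v'/2, v'/2) = Skellam(v/2, v/2) ∗ Skellam(s, s)`, so `P(|X'| ≤ k)` is an average over
`y` of `P(|X + y| ≤ k)`. The mass function `p` of `Skellam(r, r)` is symmetric, and it is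
nonincreasing in `|n|` because of the mixture representation
  `p(n) = e^{-4r} ∑_M r^M / M! * C(2M, M + n)`
  `     = ∑_M P(Poisson(4r) = M) * P(Binomial(2M, 1/2) = M + n)`,
in which each `C(2M, M + n)` is nonincreasing in `n ≥ 0`. For such a mass function, shifting the
window `[-k, k]` by `y` can only lose mass, hence `P(|X + y| ≤ k) ≤ P(|X| ≤ k)` for every `y`.
-/

open Finset
open scoped Nat

namespace Nat

theorem sum_range_choose_mul_choose_add (u w n : ℕ) :
    ∑ j ∈ range (u + 1), u.choose j * w.choose (j + n) = (u + w).choose (u + n) := by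
  rw [add_choose_eq, Finset.Nat.sum_antidiagonal_eq_sum_range_succ_mk,
    ← sum_subset (range_subset_range.mpr (by omega : u + 1 ≤ u + n + 1))
      fun i _ hi => by simp [choose_eq_zero_of_lt (by simpa using hi : u < i)],
    ← sum_range_reflect]
  refine sum_congr rfl fun j hj => ?_
  have hju : j ≤ u := mem_range_succ_iff.mp hj
  rw [add_tsub_cancel_right, choose_symm hju]
  dsimp only
  congr 2
  omega

theorem choose_two_mul_add_succ_le (M n : ℕ) :
    (2 * M).choose (M + n + 1) ≤ (2 * M).choose (M + n) := by
  refine le_of_mul_le_mul_right ?_ (succ_pos (M + n))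
  rw [choose_succ_right_eq]
  exact Nat.mul_le_mul_left _ (by omega)

end Nat

noncomputable def expTerm (x : ℝ≥0∞) (m : ℕ) : ℝ≥0∞ := x ^ m / m !

lemma expTerm_mul_expTerm (x : ℝ≥0∞) (a b : ℕ) :
    expTerm x a * expTerm x b = (a + b).choose b * expTerm x (a + b) := by
  have hfac : ((a + b)! : ℝ≥0∞) = (a + b).choose b * a ! * b ! := by
    exact_mod_cast (Nat.add_choose_mul_factorial_mul_factorial a b).symm
  have hC : ((a + b).choose b : ℝ≥0∞) ≠ 0 := by
    exact_mod_cast (Nat.choose_pos (Nat.le_add_left b a)).ne'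
  simp only [expTerm, hfac, div_eq_mul_inv, pow_add]
  rw [ENNReal.mul_inv (Or.inr (natCast_ne_top _)) (Or.inr (mod_cast b.factorial_ne_zero)),
    ENNReal.mul_inv (Or.inr (natCast_ne_top _)) (Or.inr (mod_cast a.factorial_ne_zero))]
  calc _ = x ^ a * (a ! : ℝ≥0∞)⁻¹ * (x ^ b * (b ! : ℝ≥0∞)⁻¹) := by ring
    _ = _ := by
      rw [← one_mul (x ^ a * _ * _), ← ENNReal.mul_inv_cancel hC (natCast_ne_top _)]
      ring

lemma tsum_choose_mul_add (k : ℕ) (F : ℕ → ℝ≥0∞) :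
    ∑' d, ((d + k).choose k : ℝ≥0∞) * F (d + k)
      = ∑' w, (w.choose k : ℝ≥0∞) * F w := by
  refine (add_left_injective k).tsum_eq (f := fun w => (w.choose k : ℝ≥0∞) * F w)
    fun w hw => ⟨w - k, Nat.sub_add_cancel ?_⟩
  by_contra! hwk
  simp [Nat.choose_eq_zero_of_lt hwk] at hw

lemma tsum_choose_mul_choose_add (u w n : ℕ) :
    ∑' j, (u.choose j * w.choose (j + n) : ℝ≥0∞) = (u + w).choose (u + n) := by
  rw [tsum_eq_sum (s := range (u + 1)) fun j hj => by
    simp [Nat.choose_eq_zero_of_lt (by simpa using hj : u < j)]]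
  exact_mod_cast Nat.sum_range_choose_mul_choose_add u w n

lemma tsum_expTerm_mul_expTerm (x : ℝ≥0∞) (j : ℕ) :
    ∑' c, expTerm x c * expTerm x j = ∑' u, (u.choose j : ℝ≥0∞) * expTerm x u := by
  simp_rw [expTerm_mul_expTerm]
  exact tsum_choose_mul_add j _

/-- In generating-function terms: `e^{2x} ∑_n Φ(n) t^n = e^{x (√t + 1/√t)²}`, with
`Φ(n) = ∑_j x^{2j+n} / (j! (j+n)!)` the series on the left. -/
lemma tsum_expTerm_sq_mul (x : ℝ≥0∞) (n : ℕ) :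
    (∑' a, expTerm x a) ^ 2 * ∑' j, expTerm x (j + n) * expTerm x j
      = ∑' M, ((2 * M).choose (M + n) : ℝ≥0∞) * expTerm x M := by
  calc (∑' a, expTerm x a) ^ 2 * ∑' j, expTerm x (j + n) * expTerm x j
      = ∑' j, (∑' c, expTerm x c * expTerm x j) * ∑' d, expTerm x d * expTerm x (j + n) := by
        simp_rw [ENNReal.tsum_mul_right, ← ENNReal.tsum_mul_left]
        congr 1 with j
        ring
    _ = ∑' j, (∑' u, (u.choose j : ℝ≥0∞) * expTerm x u)
          * ∑' w, (w.choose (j + n) : ℝ≥0∞) * expTerm x w := by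
        simp_rw [tsum_expTerm_mul_expTerm]
    _ = ∑' u, ∑' w, (∑' j, (u.choose j * w.choose (j + n) : ℝ≥0∞))
          * (expTerm x w * expTerm x u) := by
        simp_rw [← ENNReal.tsum_mul_right, ← ENNReal.tsum_mul_left]
        rw [ENNReal.tsum_comm]
        congr 1 with u
        rw [ENNReal.tsum_comm]
        congr 1 with w
        congr 1 with j
        ring
    _ = ∑' u, ∑' w,
          ((w + u).choose u : ℝ≥0∞) * ((w + u).choose (u + n) * expTerm x (w + u)) := by
        congr 1 with u
        congr 1 with w
        rw [tsum_choose_mul_choose_add, expTerm_mul_expTerm, add_comm w u]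
        ring
    _ = ∑' u, ∑' M, (M.choose u : ℝ≥0∞) * (M.choose (u + n) * expTerm x M) := by
        congr 1 with u
        exact tsum_choose_mul_add u fun M => (M.choose (u + n) : ℝ≥0∞) * expTerm x M
    _ = ∑' M, (∑' u, (M.choose u * M.choose (u + n) : ℝ≥0∞)) * expTerm x M := by
        rw [ENNReal.tsum_comm]
        congr 1 with M
        rw [← ENNReal.tsum_mul_right]
        simp_rw [mul_assoc]
    _ = ∑' M, ((2 * M).choose (M + n) : ℝ≥0∞) * expTerm x M := by
        simp_rw [tsum_choose_mul_choose_add, two_mul]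

lemma sum_range_natAbs_sub_neg (g : ℕ → ℝ≥0∞) (k : ℕ) (c : ℤ) :
    ∑ i ∈ range (2 * k + 1), g ((i : ℤ) - k - -c).natAbs
      = ∑ i ∈ range (2 * k + 1), g ((i : ℤ) - k - c).natAbs := by
  rw [← sum_range_reflect]
  refine sum_congr rfl fun i hi => congrArg g ?_
  have : i < 2 * k + 1 := mem_range.mp hi
  omega

lemma sum_range_natAbs_sub_succ_le (g : ℕ → ℝ≥0∞) (hg : Antitone g) (k m : ℕ) :
    ∑ i ∈ range (2 * k + 1), g ((i : ℤ) - k - (m + 1 : ℕ)).natAbs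
      ≤ ∑ i ∈ range (2 * k + 1), g ((i : ℤ) - k - m).natAbs := by
  have hshift (i : ℕ) : (i : ℤ) - k - m = ((i + 1 : ℕ) : ℤ) - k - (m + 1 : ℕ) := by
    push_cast; ring
  simp only [hshift]
  rw [sum_range_succ', sum_range_succ]
  gcongr
  apply hg
  omega

lemma sum_range_natAbs_sub_le (g : ℕ → ℝ≥0∞) (hg : Antitone g) (k : ℕ) (c : ℤ) :
    ∑ i ∈ range (2 * k + 1), g ((i : ℤ) - k - c).natAbs
      ≤ ∑ i ∈ range (2 * k + 1), g ((i : ℤ) - k).natAbs := by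
  have hnat (m : ℕ) : ∑ i ∈ range (2 * k + 1), g ((i : ℤ) - k - m).natAbs
      ≤ ∑ i ∈ range (2 * k + 1), g ((i : ℤ) - k).natAbs := by
    induction m with
    | zero => simp
    | succ m ih => exact (sum_range_natAbs_sub_succ_le g hg k m).trans ih
  obtain ⟨m, rfl | rfl⟩ := Int.eq_nat_or_neg c
  · exact hnat m
  · exact (sum_range_natAbs_sub_neg g k m).trans_le (hnat m)

lemma measure_setOf_natAbs_add_le_eq_sum (μ : Measure ℤ) (k : ℕ) (y : ℤ) :
    μ {x | (x + y).natAbs ≤ k} = ∑ i ∈ range (2 * k + 1), μ {(i : ℤ) - k - y} := by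
  have hinj : Set.InjOn (fun i : ℕ => (i : ℤ) - k - y) (range (2 * k + 1)) :=
    fun i _ j _ h => by simpa using h
  have hset : {x : ℤ | (x + y).natAbs ≤ k}
      = ↑((range (2 * k + 1)).image fun i : ℕ => (i : ℤ) - k - y) := by
    ext x
    simp only [Set.mem_ofPred_eq, coe_image, coe_range, Set.mem_image, Set.mem_Iio]
    constructor
    · intro hx
      exact ⟨(x + y + k).toNat, by omega, by omega⟩
    · rintro ⟨i, hi, rfl⟩
      omega
  rw [hset, ← sum_measure_singleton, sum_image hinj]

lemma measure_preimage_add_setOf_natAbs_le {μ : Measure ℤ} {g : ℕ → ℝ≥0∞}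
    (hg : Antitone g) (hμ : ∀ z, μ {z} = g z.natAbs) (k : ℕ) (y : ℤ) :
    μ ((· + y) ⁻¹' {x | x.natAbs ≤ k}) ≤ μ {x | x.natAbs ≤ k} := by
  have hcentered := measure_setOf_natAbs_add_le_eq_sum μ k 0
  simp only [add_zero, sub_zero] at hcentered
  rw [Set.preimage_ofPred_eq, measure_setOf_natAbs_add_le_eq_sum, hcentered]
  simp_rw [hμ]
  exact sum_range_natAbs_sub_le g hg k y

namespace MeasureTheory.Measure

variable {M : Type*} [MeasurableSpace M]

theorem conv_conv_conv_comm [AddCommMonoid M] [MeasurableAdd₂ M] (μ ν ρ τ : Measure M)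
    [SFinite μ] [SFinite ν] [SFinite ρ] [SFinite τ] :
    (μ ∗ ν) ∗ (ρ ∗ τ) = (μ ∗ ρ) ∗ (ν ∗ τ) := by
  rw [conv_assoc, ← conv_assoc ν, conv_comm ν ρ, conv_assoc, ← conv_assoc]

theorem conv_apply_le [AddMonoid M] [MeasurableAdd₂ M] (μ ν : Measure M) [SFinite μ]
    [IsProbabilityMeasure ν] {s : Set M} (hs : MeasurableSet s)
    (h : ∀ y, μ ((· + y) ⁻¹' s) ≤ μ s) : (μ ∗ ν) s ≤ μ s := by
  rw [conv, map_apply measurable_add hs, prod_apply_symm (measurable_add hs)]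
  calc ∫⁻ y, μ ((· + y) ⁻¹' s) ∂ν ≤ ∫⁻ _, μ s ∂ν := lintegral_mono h
    _ = μ s := by simp

end MeasureTheory.Measure

lemma skellam_apply (μ1 μ2 : NNReal) (s : Set ℤ) :
    skellam μ1 μ2 s = (Po(μ1).prod Po(μ2)) {nm | (nm.1 : ℤ) - nm.2 ∈ s} :=
  Measure.map_apply (measurable_of_countable _) .of_discrete

lemma skellam_eq_conv (μ1 μ2 : NNReal) :
    skellam μ1 μ2 = Po(ℤ, μ1) ∗ (Po(ℤ, μ2)).map Neg.neg := by
  rw [Measure.map_map measurable_neg (measurable_of_countable _), Measure.conv,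
    Measure.map_prod_map _ _ (measurable_of_countable _) (measurable_of_countable _),
    Measure.map_map (measurable_of_countable _) (measurable_of_countable _)]
  rfl

instance (μ1 μ2 : NNReal) : IsProbabilityMeasure (skellam μ1 μ2) :=
  Measure.isProbabilityMeasure_map (measurable_of_countable _).aemeasurable

lemma skellam_add (μ1 μ2 ν1 ν2 : NNReal) :
    skellam (μ1 + ν1) (μ2 + ν2) = skellam μ1 μ2 ∗ skellam ν1 ν2 := by
  rw [skellam_eq_conv, skellam_eq_conv, skellam_eq_conv, ← map_cast_poissonMeasure_conv,
    ← map_cast_poissonMeasure_conv, show (Neg.neg : ℤ → ℤ) = negAddMonoidHom from rfl,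
    Measure.map_conv_addMonoidHom _ (measurable_of_countable _)]
  exact Measure.conv_conv_conv_comm _ _ _ _

lemma skellam_singleton_neg (μ1 μ2 : NNReal) (z : ℤ) :
    skellam μ1 μ2 {-z} = skellam μ2 μ1 {z} := by
  rw [skellam_apply, skellam_apply, ← Measure.prod_swap,
    Measure.map_apply measurable_swap .of_discrete]
  congr 1 with nm
  simp only [Set.mem_ofPred_eq, Set.mem_singleton_iff, Set.mem_preimage, Prod.fst_swap,
    Prod.snd_swap]
  omega

lemma skellam_self_singleton_natAbs (r : NNReal) (z : ℤ) :
    skellam r r {z} = skellam r r {(z.natAbs : ℤ)} := by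
  rcases Int.natAbs_eq z with h | h
  · rw [← h]
  · rw [h, skellam_singleton_neg, Int.natAbs_neg, Int.natAbs_natCast]

lemma skellam_singleton_natCast (μ1 μ2 : NNReal) (n : ℕ) :
    skellam μ1 μ2 {(n : ℤ)} = ∑' j, Po(μ1) {j + n} * Po(μ2) {j} := by
  have hfiber : {nm : ℕ × ℕ | (nm.1 : ℤ) - nm.2 ∈ ({(n : ℤ)} : Set ℤ)}
      = ⋃ j, {(j + n, j)} := by
    ext ⟨a, b⟩
    simp only [Set.mem_ofPred_eq, Set.mem_singleton_iff, Set.mem_iUnion, Prod.mk.injEq]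
    constructor
    · intro h
      exact ⟨b, by omega, rfl⟩
    · rintro ⟨j, rfl, rfl⟩
      push_cast
      ring
  rw [skellam_apply, hfiber, measure_iUnion _ fun _ => .of_discrete]
  · simp_rw [← Set.singleton_prod_singleton, Measure.prod_prod]
  · intro i j hij
    simp [hij]

lemma poissonMeasure_singleton_eq (r : NNReal) (m : ℕ) :
    Po(r) {m} = ENNReal.ofReal (Real.exp (-r)) * expTerm r m := by
  rw [poissonMeasure_singleton, mul_div_assoc, ENNReal.ofReal_mul (Real.exp_pos _).le,
    ENNReal.ofReal_div_of_pos (by positivity), expTerm, ENNReal.ofReal_pow r.coe_nonneg,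
    ENNReal.ofReal_coe_nnreal, ENNReal.ofReal_natCast]

lemma skellam_self_singleton_natCast_eq (r : NNReal) (n : ℕ) :
    skellam r r {(n : ℤ)} = ENNReal.ofReal (Real.exp (-r)) ^ 4
      * ∑' M, ((2 * M).choose (M + n) : ℝ≥0∞) * expTerm r M := by
  have hmass : ∑' m, Po(r) {m} = 1 := by
    simpa using Measure.tsum_indicator_apply_singleton Po(r) Set.univ .univ
  rw [← tsum_expTerm_sq_mul, skellam_singleton_natCast]
  simp_rw [poissonMeasure_singleton_eq, ENNReal.tsum_mul_left] at hmass ⊢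
  set κ := ENNReal.ofReal (Real.exp (-r))
  calc ∑' j, κ * expTerm r (j + n) * (κ * expTerm r j)
      = κ ^ 2 * ∑' j, expTerm r (j + n) * expTerm r j := by
        rw [← ENNReal.tsum_mul_left]
        congr 1 with j
        ring
    _ = κ ^ 2 * (κ * ∑' a, expTerm r a) ^ 2 * ∑' j, expTerm r (j + n) * expTerm r j := by
        rw [hmass]
        ring
    _ = _ := by ring

lemma antitone_skellam_self_singleton (r : NNReal) :
    Antitone fun n : ℕ => skellam r r {(n : ℤ)} := by
  refine antitone_nat_of_succ_le fun n => ?_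
  simp only [skellam_self_singleton_natCast_eq, ← add_assoc]
  gcongr with M
  exact Nat.choose_two_mul_add_succ_le M n

theorem stmt12_general (v v' : NNReal) (hvv' : v < v') (k : ℕ) :
    skellam (v' / 2) (v' / 2) {x : ℤ | x.natAbs ≤ k}
      ≤ skellam (v / 2) (v / 2) {x : ℤ | x.natAbs ≤ k} := by
  obtain ⟨s, hs⟩ : ∃ s, v' / 2 = v / 2 + s :=
    ⟨v' / 2 - v / 2, (add_tsub_cancel_of_le (by gcongr)).symm⟩
  rw [hs, skellam_add]
  exact Measure.conv_apply_le _ _ .of_discrete fun y =>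
    measure_preimage_add_setOf_natAbs_le (antitone_skellam_self_singleton _)
      (skellam_self_singleton_natAbs _) k y

/-- For `0 < v < v'`, `X ∼ Skellam(v/2, v/2)` and `X' ∼ Skellam(v'/2, v'/2)`, `|X|` is
stochastically not greater than `|X'|`: `P(|X| ≤ k) ≥ P(|X'| ≤ k)` for all `k ∈ ℕ₀`. -/
theorem stmt12 (v v' : NNReal) (hv : 0 < v) (hvv' : v < v') (k : ℕ) :
    skellam (v' / 2) (v' / 2) {x : ℤ | x.natAbs ≤ k}
      ≤ skellam (v / 2) (v / 2) {x : ℤ | x.natAbs ≤ k} :=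
  stmt12_general v v' hvv' k
end
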